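/- arXiv:1004.3713 — 6 statements merged into one kernel-verified Lean document; each statement's English description precedes it below -/
import Mathlib

section
/- Let λ₀ be a point of the interior of D_Λ and set x₀ = Λ'(λ₀). If limsup_{n→∞} (log k(n))/n < Λ*(x₀), then for every sufficiently small ε > 0, with probability 1, for all n large enough the set {1 ≤ j ≤ k(n) : ΔS_n(j,ω) ∈ [n(x₀−ε), n(x₀+ε)]} is empty. (Theorem 1(2).) -/
open MeasureTheory ProbabilityTheory Filter Set Real
open scoped ENNReal NNReal Classical


lemma aux_ident_int {Ω : Type*} [MeasurableSpace Ω] (P : Measure Ω)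
    (X : ℕ → Ω → ℝ) (hXmeas : ∀ i, Measurable (X i))
    (hXident : ∀ i, Measure.map (X i) P = Measure.map (X 1) P)
    (t : ℝ) (hint : Integrable (fun ω => Real.exp (t * X 1 ω)) P) (i : ℕ) :
    Integrable (fun ω => Real.exp (t * X i ω)) P := by
  have hg : ∀ j : ℕ, AEStronglyMeasurable (fun x : ℝ => Real.exp (t * x))
      (Measure.map (X j) P) :=
    fun j => ((measurable_const_mul t).exp).aestronglyMeasurable
  have h1 : Integrable ((fun x : ℝ => Real.exp (t * x)) ∘ (X 1)) P := hint
  rw [← integrable_map_measure (hg 1) (hXmeas 1).aemeasurable, ← hXident i] at h1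
  exact (integrable_map_measure (hg i) (hXmeas i).aemeasurable).mp h1

lemma aux_ident_mgf {Ω : Type*} [MeasurableSpace Ω] (P : Measure Ω)
    (X : ℕ → Ω → ℝ) (hXmeas : ∀ i, Measurable (X i))
    (hXident : ∀ i, Measure.map (X i) P = Measure.map (X 1) P)
    (t : ℝ) (i : ℕ) : mgf (X i) P t = mgf (X 1) P t := by
  have hg : ∀ j : ℕ, AEStronglyMeasurable (fun x : ℝ => Real.exp (t * x))
      (Measure.map (X j) P) :=
    fun j => ((measurable_const_mul t).exp).aestronglyMeasurable
  have e1 : mgf (X i) P t = ∫ x, Real.exp (t * x) ∂(Measure.map (X i) P) :=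
    (integral_map (hXmeas i).aemeasurable (hg i)).symm
  have e2 : mgf (X 1) P t = ∫ x, Real.exp (t * x) ∂(Measure.map (X 1) P) :=
    (integral_map (hXmeas 1).aemeasurable (hg 1)).symm
  rw [e1, e2, hXident i]

lemma aux_chernoff {Ω : Type*} [MeasurableSpace Ω] (P : Measure Ω) [IsProbabilityMeasure P]
    (X : ℕ → Ω → ℝ) (hXmeas : ∀ i, Measurable (X i))
    (hXindep : iIndepFun X P)
    (hXident : ∀ i, Measure.map (X i) P = Measure.map (X 1) P)
    (t : ℝ) (hint : Integrable (fun ω => Real.exp (t * X 1 ω)) P)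
    (m n : ℕ) (a b : ℝ) :
    (P {ω | (∑ i ∈ Finset.Ioc m (m + n), X i ω) ∈ Set.Icc a b}).toReal ≤
      Real.exp ((n : ℝ) * Real.log (mgf (X 1) P t)
        - (if 0 ≤ t then t * a else t * b)) := by
  set s : Finset ℕ := Finset.Ioc m (m + n) with hsdef
  have hcard : s.card = n := by rw [hsdef, Nat.card_Ioc]; omega
  have hint_i : ∀ i ∈ s, Integrable (fun ω => Real.exp (t * X i ω)) P :=
    fun i _ => aux_ident_int P X hXmeas hXident t hint i
  have hintT : Integrable (fun ω => Real.exp (t * (∑ i ∈ s, X i) ω)) P :=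
    hXindep.integrable_exp_mul_sum hXmeas hint_i
  have hmgfpos : 0 < mgf (X 1) P t := mgf_pos hint
  have hmgfT : mgf (∑ i ∈ s, X i) P t
      = Real.exp ((n : ℝ) * Real.log (mgf (X 1) P t)) := by
    rw [hXindep.mgf_sum hXmeas s,
      Finset.prod_congr rfl (fun i _ => aux_ident_mgf P X hXmeas hXident t i),
      Finset.prod_const, hcard, Real.exp_nat_mul, Real.exp_log hmgfpos]
  by_cases ht : 0 ≤ t
  · rw [if_pos ht]
    calc (P {ω | (∑ i ∈ s, X i ω) ∈ Set.Icc a b}).toReal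
        ≤ (P {ω | a ≤ (∑ i ∈ s, X i) ω}).toReal := by
          apply ENNReal.toReal_mono (measure_ne_top _ _)
          apply measure_mono
          intro ω hω
          simp only [Set.mem_setOf_eq, Finset.sum_apply]
          exact hω.1
      _ ≤ Real.exp (-t * a) * mgf (∑ i ∈ s, X i) P t :=
          measure_ge_le_exp_mul_mgf a ht hintT
      _ = _ := by rw [hmgfT, ← Real.exp_add]; congr 1; ring
  · rw [if_neg ht]
    calc (P {ω | (∑ i ∈ s, X i ω) ∈ Set.Icc a b}).toReal
        ≤ (P {ω | (∑ i ∈ s, X i) ω ≤ b}).toReal := by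
          apply ENNReal.toReal_mono (measure_ne_top _ _)
          apply measure_mono
          intro ω hω
          simp only [Set.mem_setOf_eq, Finset.sum_apply]
          exact hω.2
      _ ≤ Real.exp (-t * b) * mgf (∑ i ∈ s, X i) P t :=
          measure_le_le_exp_mul_mgf b (le_of_not_ge ht) hintT
      _ = _ := by rw [hmgfT, ← Real.exp_add]; congr 1; ring


/-- **Theorem 1(2).**
Under the same assumptions, if `limsup (log k(n))/n < Λ*(x₀)`, then for every sufficiently
small `ε > 0`, almost surely, for all large `n` the set
`{1 ≤ j ≤ k(n) : ΔSₙ(j,ω) ∈ [n(x₀-ε), n(x₀+ε)]}` is empty. -/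
theorem theorem1_part2
    {Ω : Type*} [MeasurableSpace Ω] (P : Measure Ω) [IsProbabilityMeasure P]
    (X : ℕ → Ω → ℝ) (hXmeas : ∀ i, Measurable (X i))
    (hXindep : iIndepFun X P)
    (hXident : ∀ i, Measure.map (X i) P = Measure.map (X 1) P)
    (DΛ : Set ℝ) (hDΛ : DΛ.OrdConnected) (h0DΛ : (0 : ℝ) ∈ interior DΛ)
    (hMgf : ∀ lam ∈ DΛ, Integrable (fun ω => Real.exp (lam * X 1 ω)) P)
    (Λ : ℝ → ℝ) (hΛ : ∀ lam, Λ lam = Real.log (∫ ω, Real.exp (lam * X 1 ω) ∂P))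
    (Λstar : ℝ → ℝ) (hΛstar : ∀ x, Λstar x = ⨆ lam : DΛ, ((lam : ℝ) * x - Λ lam))
    (S : ℕ → Ω → ℝ) (hS : ∀ n ω, S n ω = ∑ i ∈ Finset.Icc 1 n, X i ω)
    (k : ℕ → ℕ) (hkpos : ∀ n, 0 < k n)
    (lam₀ : ℝ) (hlam₀ : lam₀ ∈ interior DΛ)
    (x₀ : ℝ) (hx₀ : HasDerivAt Λ x₀ lam₀)
    (hlimsup : Filter.atTop.limsup (fun n => ((Real.log (k n) / n : ℝ) : EReal)) <
      (Λstar x₀ : EReal)) :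
    ∃ ε₀ > (0 : ℝ), ∀ ε, 0 < ε → ε ≤ ε₀ →
      ∀ᵐ ω ∂P, ∀ᶠ n in atTop, ∀ j ∈ Finset.Icc 1 (k n),
        (S (j * n) ω - S ((j - 1) * n) ω) ∉
          Set.Icc ((n : ℝ) * (x₀ - ε)) ((n : ℝ) * (x₀ + ε)) := by
  classical
  obtain ⟨c, hc1, hc2⟩ := EReal.lt_iff_exists_real_btwn.mp hlimsup
  rw [EReal.coe_lt_coe_iff] at hc2
  have hne : Nonempty DΛ := ⟨⟨0, interior_subset h0DΛ⟩⟩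
  rw [hΛstar x₀] at hc2
  obtain ⟨⟨t₁, ht₁D⟩, ht₁⟩ := exists_lt_of_lt_ciSup hc2
  simp only at ht₁
  set A := t₁ * x₀ - Λ t₁ with hA
  have hcA : c < A := ht₁
  have habs : (0:ℝ) ≤ |t₁| := abs_nonneg _
  refine ⟨(A - c) / (2 * (|t₁| + 1)), by have h := sub_pos.mpr hcA; positivity, ?_⟩
  intro ε hε hεle
  set r := A - |t₁| * ε with hr
  have hrc : c < r := by
    have h1 : |t₁| * ε ≤ |t₁| * ((A - c) / (2 * (|t₁| + 1))) :=
      mul_le_mul_of_nonneg_left hεle habs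
    have h2 : |t₁| * ((A - c) / (2 * (|t₁| + 1))) < A - c := by
      rw [mul_div_assoc', div_lt_iff₀ (by positivity)]
      nlinarith [sub_pos.mpr hcA]
    simp only [hr]; linarith
  -- the bad events
  set s : ℕ → Set Ω := fun n => {ω | ∃ j ∈ Finset.Icc 1 (k n),
    S (j * n) ω - S ((j - 1) * n) ω ∈
      Set.Icc ((n : ℝ) * (x₀ - ε)) ((n : ℝ) * (x₀ + ε))} with hsdef
  -- increment identity
  have hΔ : ∀ n j ω, 1 ≤ j → S (j * n) ω - S ((j - 1) * n) ω
      = ∑ i ∈ Finset.Ioc ((j - 1) * n) (j * n), X i ω := by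
    intro n j ω hj
    have h0 : ∀ m, S m ω = ∑ i ∈ Finset.Ioc 0 m, X i ω := by
      intro m; rw [hS]
      have hIc : Finset.Icc 1 m = Finset.Ioc 0 m := by
        ext i
        simp only [Finset.mem_Icc, Finset.mem_Ioc]
        omega
      rw [hIc]
    rw [h0, h0]
    have hle : (j - 1) * n ≤ j * n := Nat.mul_le_mul_right n (Nat.sub_le j 1)
    have hsum := Finset.sum_Ioc_consecutive (fun i => X i ω)
      (Nat.zero_le ((j - 1) * n)) hle
    linarith [hsum]
  -- per-event Chernoff bound
  have hE : ∀ (n j : ℕ), 1 ≤ j →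
      P {ω | (∑ i ∈ Finset.Ioc ((j - 1) * n) (j * n), X i ω) ∈
        Set.Icc ((n : ℝ) * (x₀ - ε)) ((n : ℝ) * (x₀ + ε))}
      ≤ ENNReal.ofReal (Real.exp (-(n : ℝ) * r)) := by
    intro n j hj
    have hjn : j * n = (j - 1) * n + n := by
      have h' : j - 1 + 1 = j := Nat.sub_add_cancel hj
      calc j * n = (j - 1 + 1) * n := by rw [h']
        _ = (j - 1) * n + n := by ring
    rw [hjn]
    have hcher := aux_chernoff P X hXmeas hXindep hXident t₁ (hMgf t₁ ht₁D)
      ((j - 1) * n) n ((n : ℝ) * (x₀ - ε)) ((n : ℝ) * (x₀ + ε))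
    have hfin := measure_ne_top P {ω | (∑ i ∈ Finset.Ioc ((j - 1) * n) ((j - 1) * n + n), X i ω) ∈
        Set.Icc ((n : ℝ) * (x₀ - ε)) ((n : ℝ) * (x₀ + ε))}
    rw [← ENNReal.ofReal_toReal hfin]
    apply ENNReal.ofReal_le_ofReal
    refine hcher.trans ?_
    apply Real.exp_le_exp.mpr
    have hmgfΛ : Real.log (mgf (X 1) P t₁) = Λ t₁ := by
      rw [hΛ]; rfl
    rw [hmgfΛ, hr, hA]
    by_cases hts : 0 ≤ t₁
    · rw [if_pos hts, abs_of_nonneg hts]; apply le_of_eq; ring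
    · rw [if_neg hts, abs_of_neg (lt_of_not_ge hts)]; apply le_of_eq; ring
  -- union bound
  have hs_bound : ∀ n, P (s n) ≤
      ENNReal.ofReal ((k n : ℝ) * Real.exp (-(n : ℝ) * r)) := by
    intro n
    have hsub : s n ⊆ ⋃ j ∈ Finset.Icc 1 (k n),
        {ω | (∑ i ∈ Finset.Ioc ((j - 1) * n) (j * n), X i ω) ∈
          Set.Icc ((n : ℝ) * (x₀ - ε)) ((n : ℝ) * (x₀ + ε))} := by
      intro ω hω
      obtain ⟨j, hj, hmem⟩ := hω
      refine Set.mem_biUnion hj ?_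
      rw [Set.mem_setOf_eq, ← hΔ n j ω (Finset.mem_Icc.mp hj).1]
      exact hmem
    calc P (s n) ≤ ∑ j ∈ Finset.Icc 1 (k n),
          P {ω | (∑ i ∈ Finset.Ioc ((j - 1) * n) (j * n), X i ω) ∈
            Set.Icc ((n : ℝ) * (x₀ - ε)) ((n : ℝ) * (x₀ + ε))} :=
        (measure_mono hsub).trans (measure_biUnion_finset_le _ _)
      _ ≤ ∑ j ∈ Finset.Icc 1 (k n), ENNReal.ofReal (Real.exp (-(n : ℝ) * r)) :=
        Finset.sum_le_sum (fun j hj => hE n j (Finset.mem_Icc.mp hj).1)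
      _ = (k n : ℝ≥0∞) * ENNReal.ofReal (Real.exp (-(n : ℝ) * r)) := by
        rw [Finset.sum_const, Nat.card_Icc]
        simp [nsmul_eq_mul]
      _ = ENNReal.ofReal ((k n : ℝ) * Real.exp (-(n : ℝ) * r)) := by
        rw [ENNReal.ofReal_mul (by positivity), ENNReal.ofReal_natCast]
  -- eventual smallness of k
  have hev := eventually_lt_of_limsup_lt hc1
  obtain ⟨N₀, hN₀⟩ := eventually_atTop.mp hev
  set N := max N₀ 1 with hN
  have hkN : ∀ n, N ≤ n →
      (k n : ℝ) * Real.exp (-(n : ℝ) * r) ≤ Real.exp (-(n : ℝ) * (r - c)) := by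
    intro n hn
    have hn1 : 1 ≤ n := le_trans (le_max_right _ _) hn
    have h := hN₀ n (le_trans (le_max_left _ _) hn)
    rw [EReal.coe_lt_coe_iff] at h
    have hnpos : (0 : ℝ) < n := by exact_mod_cast hn1
    have hlogk : Real.log (k n) < n * c := by
      rw [div_lt_iff₀ hnpos] at h; linarith
    have hkpos' : (0 : ℝ) < k n := by exact_mod_cast hkpos n
    have hk : (k n : ℝ) ≤ Real.exp ((n : ℝ) * c) := by
      calc (k n : ℝ) = Real.exp (Real.log (k n)) := (Real.exp_log hkpos').symm
        _ ≤ Real.exp ((n : ℝ) * c) := Real.exp_le_exp.mpr hlogk.le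
    calc (k n : ℝ) * Real.exp (-(n : ℝ) * r)
        ≤ Real.exp ((n : ℝ) * c) * Real.exp (-(n : ℝ) * r) :=
          mul_le_mul_of_nonneg_right hk (Real.exp_pos _).le
      _ = Real.exp (-(n : ℝ) * (r - c)) := by rw [← Real.exp_add]; congr 1; ring
  -- summability
  set q : ℝ≥0∞ := ENNReal.ofReal (Real.exp (-(r - c))) with hq
  have hq1 : q < 1 := by
    rw [hq, ENNReal.ofReal_lt_one]
    rw [Real.exp_lt_one_iff]
    linarith
  have htsum : (∑' n, P (s n)) ≠ ⊤ := by
    have hle : ∀ n, P (s n) ≤ (if n < N then 1 else 0) + q ^ n := by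
      intro n
      by_cases hn : n < N
      · rw [if_pos hn]
        exact le_trans prob_le_one le_self_add
      · rw [if_neg hn, zero_add]
        push_neg at hn
        refine (hs_bound n).trans ?_
        refine (ENNReal.ofReal_le_ofReal (hkN n hn)).trans ?_
        have he : Real.exp (-(n : ℝ) * (r - c)) = (Real.exp (-(r - c))) ^ n := by
          rw [← Real.exp_nat_mul]; congr 1; ring
        rw [he, ← ENNReal.ofReal_pow (Real.exp_pos _).le]
    refine ne_top_of_le_ne_top ?_ (ENNReal.tsum_le_tsum hle)
    rw [ENNReal.tsum_add]
    apply ENNReal.add_ne_top.mpr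
    constructor
    · have heq : (∑' n, (if n < N then (1 : ℝ≥0∞) else 0))
          = ∑ n ∈ Finset.range N, (if n < N then (1 : ℝ≥0∞) else 0) :=
        tsum_eq_sum (fun n hn => if_neg (by simpa using hn))
      rw [heq]
      refine ne_of_lt ?_
      apply ENNReal.sum_lt_top.mpr
      intro n _
      split <;> simp
    · rw [ENNReal.tsum_geometric]
      refine ENNReal.inv_ne_top.mpr ?_
      intro h
      exact absurd (tsub_eq_zero_iff_le.mp h) (not_le.mpr hq1)
  -- Borel-Cantelli
  have hae := MeasureTheory.ae_eventually_notMem htsum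
  filter_upwards [hae] with ω hω
  filter_upwards [hω] with n hn
  intro j hj hmem
  exact hn ⟨j, hj, hmem⟩
end

section
/- Assume (A1), (A2) and (A3). Let x ∈ D_I. If limsup_{n→∞} (log k(n))/n < I(x), then there exists ε > 0 such that, with probability 1, for all n large enough the set {1 ≤ j ≤ k(n) : S_nΦ(T^{(j−1)n}X(ω))/n ∈ B(x,ε)} is empty, where B(x,ε) is the closed ball of center x and radius ε. (Theorem 3(1), second part.) -/
open MeasureTheory ProbabilityTheory Filter Set Real
open scoped ENNReal NNReal Classical Topology

/-- **Theorem 3(1), second part.**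
Under (A1), (A2) and (A3), if `x ∈ D_I` and `limsup (log k(n))/n < I(x)`, then there is
`ε > 0` such that almost surely, for all large `n`, the set
`{1 ≤ j ≤ k(n) : SₙΦ(T^{(j-1)n}X(ω))/n ∈ B(x,ε)}` is empty. -/
theorem theorem3_part1_second
    {Ω : Type*} [MeasurableSpace Ω] (P : Measure Ω) [IsProbabilityMeasure P]
    {E : Type*} [MeasurableSpace E]
    {𝒴 : Type*} [NormedAddCommGroup 𝒴] [NormedSpace ℝ 𝒴]
    [MeasurableSpace 𝒴] [BorelSpace 𝒴]
    -- the stationary process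
    (Xseq : Ω → ℕ → E) (hXmeas : Measurable Xseq)
    (hstat : Measure.map (fun ω => fun i => Xseq ω (i + 1)) P = Measure.map Xseq P)
    -- the functionals SₙΦ
    (SΦ : ℕ → (ℕ → E) → 𝒴) (hSΦmeas : ∀ n, Measurable (SΦ n))
    -- the laws μₙ of SₙΦ(X)/n
    (μ : ℕ → Measure 𝒴)
    (hμ : ∀ n, μ n = Measure.map (fun ω => (n : ℝ)⁻¹ • SΦ n (Xseq ω)) P)
    -- (A1): LDP with rate function I
    (I : 𝒴 → ℝ≥0∞) (hIlsc : LowerSemicontinuous I)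
    (hLDP : ∀ Γ : Set 𝒴,
      -(⨅ x ∈ interior Γ, (I x : EReal)) ≤
          Filter.atTop.liminf (fun n : ℕ => ((n : ℝ)⁻¹ : EReal) * ENNReal.log (μ n Γ)) ∧
        Filter.atTop.limsup (fun n : ℕ => ((n : ℝ)⁻¹ : EReal) * ENNReal.log (μ n Γ)) ≤
          -(⨅ x ∈ closure Γ, (I x : EReal)))
    -- (A2): mixing
    (alphaX : ℕ → ℝ) (halpha0 : alphaX 0 = 1 / 2)
    (halpha : ∀ m, 1 ≤ m → alphaX m = ⨆ i : ℕ, sSup {r : ℝ | ∃ A B : Set Ω,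
      MeasurableSet[⨆ kk ∈ Set.Iic i,
        MeasurableSpace.comap (fun ω => Xseq ω kk) inferInstance] A ∧
      MeasurableSet[⨆ jj ∈ Set.Ici (i + m),
        MeasurableSpace.comap (fun ω => Xseq ω jj) inferInstance] B ∧
      r = |(P A).toReal * (P B).toReal - (P (A ∩ B)).toReal|})
    (αinv : ℝ → ℝ≥0∞)
    (hαinv : ∀ u, αinv u = sInf ((fun m : ℕ => (m : ℝ≥0∞)) '' {m | alphaX m ≤ u}))
    (hA2 : ∀ h : ℝ, 0 < h → ∫⁻ u in Set.Ioc (0 : ℝ) 1, (αinv u) ^ h ∂volume < ⊤)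
    -- (A3): approximation by functions of 2n coordinates
    (SΦapp : ℕ → (ℕ → E) → 𝒴)
    (happdep : ∀ n (z z' : ℕ → E), (∀ i < 2 * n, z i = z' i) → SΦapp n z = SΦapp n z')
    (δ : ℕ → ℝ) (hδ0 : Tendsto δ atTop (nhds 0))
    (hδ : ∀ n z, ‖SΦ n z - SΦapp n z‖ ≤ (n : ℝ) * δ n)
    -- the empirical measures μₙ^ω
    (k : ℕ → ℕ) (hkpos : ∀ n, 0 < k n)
    (μω : ℕ → Ω → Measure 𝒴)
    (hμω : ∀ n ω, μω n ω = (k n : ℝ≥0∞)⁻¹ •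
      ∑ j ∈ Finset.Icc 1 (k n),
        Measure.dirac ((n : ℝ)⁻¹ • SΦ n (fun i => Xseq ω (i + (j - 1) * n))))
    -- the point x ∈ D_I and the growth condition on k(n)
    (x : 𝒴) (hx : I x ≠ ⊤)
    (hlimsup : Filter.atTop.limsup (fun n => ((Real.log (k n) / n : ℝ) : EReal)) <
      (I x : EReal)) :
    ∃ ε > (0 : ℝ), ∀ᵐ ω ∂P, ∀ᶠ n in atTop, ∀ j ∈ Finset.Icc 1 (k n),
      (n : ℝ)⁻¹ • SΦ n (fun i => Xseq ω (i + (j - 1) * n)) ∉ Metric.closedBall x ε := by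
  classical
  -- An auxiliary probability-measure instance for each μ n
  have hprob : ∀ n, IsProbabilityMeasure (μ n) := by
    intro n
    rw [hμ n]
    exact Measure.isProbabilityMeasure_map (((hSΦmeas n).const_smul _).comp hXmeas).aemeasurable
  -- the limsup is nonnegative
  set L := Filter.atTop.limsup (fun n => ((Real.log (k n) / n : ℝ) : EReal)) with hLdef
  have hL0 : (0 : EReal) ≤ L := by
    apply le_limsup_of_frequently_le'
    apply Frequently.of_forall
    intro n
    have h1 : (0:ℝ) ≤ Real.log (k n) / n := by
      apply div_nonneg _ (Nat.cast_nonneg n)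
      apply Real.log_nonneg
      exact_mod_cast hkpos n
    exact_mod_cast h1
  -- choose real numbers L < a < b < c < I x
  obtain ⟨a, haL, haI⟩ := EReal.exists_between_coe_real hlimsup
  obtain ⟨b, hab, hbI⟩ := EReal.exists_between_coe_real haI
  obtain ⟨c, hbc, hcI⟩ := EReal.exists_between_coe_real hbI
  have ha0 : (0:ℝ) ≤ a := by
    have := lt_of_le_of_lt hL0 haL
    exact_mod_cast this.le
  have habR : a < b := EReal.coe_lt_coe_iff.mp hab
  have hbcR : b < c := EReal.coe_lt_coe_iff.mp hbc
  have hc0 : (0:ℝ) ≤ c := by linarith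
  -- the open set where I > c, and a closed ball inside it
  have hcI' : ENNReal.ofReal c < I x := by
    rw [← EReal.coe_ennreal_lt_coe_ennreal_iff, EReal.coe_ennreal_ofReal, max_eq_left hc0]
    exact hcI
  have hUopen : IsOpen (I ⁻¹' Set.Ioi (ENNReal.ofReal c)) := hIlsc.isOpen_preimage _
  have hxU : x ∈ I ⁻¹' Set.Ioi (ENNReal.ofReal c) := hcI'
  obtain ⟨ε₀, hε₀, hball⟩ := Metric.isOpen_iff.mp hUopen x hxU
  set ε : ℝ := ε₀ / 2 with hεdef
  have hε : 0 < ε := by positivity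
  set B : Set 𝒴 := Metric.closedBall x ε with hBdef
  have hBU : B ⊆ I ⁻¹' Set.Ioi (ENNReal.ofReal c) :=
    (Metric.closedBall_subset_ball (by linarith)).trans hball
  have hBclosed : IsClosed B := Metric.isClosed_closedBall
  have hBmeas : MeasurableSet B := hBclosed.measurableSet
  -- LDP upper bound on the ball
  have hinf : ((c:ℝ):EReal) ≤ ⨅ y ∈ closure B, (I y : EReal) := by
    rw [hBclosed.closure_eq]
    refine le_iInf₂ fun y hy => ?_
    have h2 : ENNReal.ofReal c < I y := hBU hy
    have h3 : ((ENNReal.ofReal c : ℝ≥0∞) : EReal) ≤ (I y : EReal) := by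
      exact_mod_cast h2.le
    rwa [EReal.coe_ennreal_ofReal, max_eq_left hc0] at h3
  have hls : Filter.atTop.limsup
      (fun n : ℕ => ((n : ℝ)⁻¹ : EReal) * ENNReal.log (μ n B)) ≤ ((-c:ℝ):EReal) := by
    refine (hLDP B).2.trans ?_
    rw [EReal.coe_neg]
    exact EReal.neg_le_neg_iff.mpr hinf
  -- eventual bounds
  have hev1 : ∀ᶠ n in atTop, ((Real.log (k n) / n : ℝ) : EReal) < ((a:ℝ):EReal) :=
    eventually_lt_of_limsup_lt haL
  have hev2 : ∀ᶠ n : ℕ in atTop,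
      ((n : ℝ)⁻¹ : EReal) * ENNReal.log (μ n B) < ((-b:ℝ):EReal) := by
    refine eventually_lt_of_limsup_lt (lt_of_le_of_lt hls ?_)
    exact_mod_cast neg_lt_neg hbcR
  -- stationarity: shifts preserve the law of the process
  have hshift : ∀ m : ℕ,
      Measure.map (fun ω => fun i => Xseq ω (i + m)) P = Measure.map Xseq P := by
    intro m
    induction m with
    | zero => simp
    | succ m ih =>
      have hgm : Measurable (fun ω => fun i => Xseq ω (i + m)) :=
        measurable_pi_lambda _ fun i => (measurable_pi_apply (i + m)).comp hXmeas
      have hsh : Measurable (fun z : ℕ → E => fun i => z (i + 1)) :=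
        measurable_pi_lambda _ fun i => measurable_pi_apply (i + 1)
      have h1 : (fun ω => fun i => Xseq ω (i + (m + 1)))
          = (fun z : ℕ → E => fun i => z (i + 1)) ∘ (fun ω => fun i => Xseq ω (i + m)) := by
        funext ω
        funext i
        simp only [Function.comp_apply]
        congr 1
        omega
      rw [h1, ← Measure.map_map hsh hgm, ih, Measure.map_map hsh hXmeas]
      exact hstat
  -- each block has law μ n
  have hPj : ∀ n j : ℕ,
      P {ω | (n : ℝ)⁻¹ • SΦ n (fun i => Xseq ω (i + (j - 1) * n)) ∈ B} = μ n B := by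
    intro n j
    set m := (j - 1) * n with hm
    have hh : Measurable (fun y : ℕ → E => (n:ℝ)⁻¹ • SΦ n y) := (hSΦmeas n).const_smul _
    have hgm : Measurable (fun ω => fun i => Xseq ω (i + m)) :=
      measurable_pi_lambda _ fun i => (measurable_pi_apply (i + m)).comp hXmeas
    have hf : Measurable (fun ω => (n:ℝ)⁻¹ • SΦ n (fun i => Xseq ω (i + m))) :=
      hh.comp hgm
    have h1 : {ω | (n : ℝ)⁻¹ • SΦ n (fun i => Xseq ω (i + m)) ∈ B}
        = (fun ω => (n:ℝ)⁻¹ • SΦ n (fun i => Xseq ω (i + m))) ⁻¹' B := rfl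
    rw [h1, ← Measure.map_apply hf hBmeas]
    have h2 : (fun ω => (n:ℝ)⁻¹ • SΦ n (fun i => Xseq ω (i + m)))
        = (fun y : ℕ → E => (n:ℝ)⁻¹ • SΦ n y) ∘ (fun ω => fun i => Xseq ω (i + m)) := rfl
    rw [h2, ← Measure.map_map hh hgm, hshift m, Measure.map_map hh hXmeas, hμ n]
    rfl
  -- bad events and the union bound
  set bad : ℕ → Set Ω := fun n => ⋃ j ∈ Finset.Icc 1 (k n),
    {ω | (n : ℝ)⁻¹ • SΦ n (fun i => Xseq ω (i + (j - 1) * n)) ∈ B} with hbaddef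
  have hbad : ∀ n, P (bad n) ≤ (k n : ℝ≥0∞) * μ n B := by
    intro n
    calc P (bad n) ≤ ∑ j ∈ Finset.Icc 1 (k n),
        P {ω | (n : ℝ)⁻¹ • SΦ n (fun i => Xseq ω (i + (j - 1) * n)) ∈ B} :=
          measure_biUnion_finset_le _ _
    _ = ∑ j ∈ Finset.Icc 1 (k n), μ n B := Finset.sum_congr rfl fun j _ => hPj n j
    _ = (k n : ℝ≥0∞) * μ n B := by
        rw [Finset.sum_const, Nat.card_Icc]
        simp [nsmul_eq_mul]
  -- eventual exponential bound
  have hev : ∀ᶠ n in atTop, P (bad n) ≤ ENNReal.ofReal (Real.exp (a - b) ^ n) := by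
    filter_upwards [hev1, hev2, eventually_ge_atTop 1] with n h1 h2 hn1
    have hn' : (0:ℝ) < n := by exact_mod_cast hn1
    -- bound on k n
    have hk : (k n : ℝ) ≤ Real.exp (a * n) := by
      have h3 : Real.log (k n) / n < a := EReal.coe_lt_coe_iff.mp h1
      have h4 : Real.log (k n) < a * n := by
        rw [div_lt_iff₀ hn'] at h3
        linarith [h3]
      have h5 : (0:ℝ) < k n := by exact_mod_cast hkpos n
      calc (k n : ℝ) = Real.exp (Real.log (k n)) := (Real.exp_log h5).symm
      _ ≤ Real.exp (a * n) := Real.exp_le_exp.mpr h4.le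
    -- bound on μ n B
    have hμB : μ n B ≤ ENNReal.ofReal (Real.exp (-b * n)) := by
      have hXtop : ENNReal.log (μ n B) ≠ ⊤ := by
        haveI := hprob n
        simp [ENNReal.log_eq_top_iff, measure_ne_top]
      have hlog : ENNReal.log (μ n B) ≤ ((-b * n : ℝ) : EReal) := by
        rcases eq_or_ne (ENNReal.log (μ n B)) ⊥ with hXb | hXb
        · simp [hXb]
        · have hXt : ((ENNReal.log (μ n B)).toReal : EReal) = ENNReal.log (μ n B) :=
            EReal.coe_toReal hXtop hXb
          set t : ℝ := (ENNReal.log (μ n B)).toReal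
          rw [← hXt] at h2 ⊢
          rw [← EReal.coe_inv, ← EReal.coe_mul] at h2
          have h6 : (n:ℝ)⁻¹ * t < -b := EReal.coe_lt_coe_iff.mp h2
          apply EReal.coe_le_coe_iff.mpr
          have h7 : (n:ℝ) * ((n:ℝ)⁻¹ * t) < (n:ℝ) * (-b) :=
            mul_lt_mul_of_pos_left h6 hn'
          rw [← mul_assoc, mul_inv_cancel₀ (ne_of_gt hn'), one_mul] at h7
          linarith
      have h8 : ENNReal.log (μ n B)
          ≤ ENNReal.log (ENNReal.ofReal (Real.exp (-b * n))) := by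
        rw [ENNReal.log_ofReal_of_pos (Real.exp_pos _), Real.log_exp]
        exact hlog
      exact ENNReal.log_le_log_iff.mp h8
    calc P (bad n) ≤ (k n : ℝ≥0∞) * μ n B := hbad n
    _ ≤ ENNReal.ofReal (Real.exp (a * n)) * ENNReal.ofReal (Real.exp (-b * n)) := by
        apply mul_le_mul'
        · rw [← ENNReal.ofReal_natCast (k n)]
          exact ENNReal.ofReal_le_ofReal hk
        · exact hμB
    _ = ENNReal.ofReal (Real.exp (a - b) ^ n) := by
        rw [← ENNReal.ofReal_mul (Real.exp_nonneg _), ← Real.exp_add]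
        congr 1
        rw [← Real.exp_nat_mul]
        congr 1
        ring
  -- summability of the bad probabilities
  obtain ⟨N, hN⟩ := eventually_atTop.mp hev
  set r : ℝ := Real.exp (a - b) with hrdef
  have hr0 : 0 < r := Real.exp_pos _
  have hr1 : r < 1 := by
    rw [hrdef, Real.exp_lt_one_iff]
    linarith
  set C : ℝ := r⁻¹ ^ N with hCdef
  have hC0 : 0 ≤ C := by positivity
  have hterm : ∀ n, P (bad n) ≤ ENNReal.ofReal (C * r ^ n) := by
    intro n
    by_cases hn : N ≤ n
    · refine (hN n hn).trans (ENNReal.ofReal_le_ofReal ?_)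
      have hC1 : 1 ≤ C := one_le_pow₀ (one_le_inv_iff₀.mpr ⟨hr0, hr1.le⟩)
      nlinarith [pow_nonneg hr0.le n]
    · push_neg at hn
      refine le_trans prob_le_one ?_
      rw [show (1:ℝ≥0∞) = ENNReal.ofReal 1 from ENNReal.ofReal_one.symm]
      apply ENNReal.ofReal_le_ofReal
      have h1 : r ^ N ≤ r ^ n := pow_le_pow_of_le_one hr0.le hr1.le hn.le
      have h2 : (0:ℝ) < r ^ N := pow_pos hr0 N
      calc (1:ℝ) = r⁻¹ ^ N * r ^ N := by
            rw [inv_pow]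
            field_simp
      _ ≤ C * r ^ n := mul_le_mul_of_nonneg_left h1 (by positivity)
  have hsum : (∑' n, P (bad n)) ≠ ⊤ := by
    have hle : (∑' n, P (bad n)) ≤ ∑' n, ENNReal.ofReal (C * r ^ n) :=
      ENNReal.tsum_le_tsum hterm
    refine ne_top_of_le_ne_top ?_ hle
    have heq : ∀ n : ℕ, ENNReal.ofReal (C * r ^ n)
        = ENNReal.ofReal C * (ENNReal.ofReal r) ^ n := by
      intro n
      rw [ENNReal.ofReal_mul hC0, ENNReal.ofReal_pow hr0.le]
    rw [tsum_congr heq, ENNReal.tsum_mul_left, ENNReal.tsum_geometric]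
    apply ENNReal.mul_ne_top ENNReal.ofReal_ne_top
    refine ENNReal.inv_ne_top.mpr ?_
    rw [ne_eq, tsub_eq_zero_iff_le, not_le]
    exact ENNReal.ofReal_lt_one.mpr hr1
  -- Borel-Cantelli and conclusion
  refine ⟨ε, hε, ?_⟩
  filter_upwards [MeasureTheory.ae_eventually_notMem hsum] with ω hω
  filter_upwards [hω] with n hn j hj hmem
  exact hn (Set.mem_iUnion₂.mpr ⟨j, hj, hmem⟩)
end

section
/- Assume (A1), (A2) and (A3). Let x ∈ 𝒴 \ D_I, i.e. I(x) = ∞. Then with probability 1, lim_{ε→0⁺} limsup_{n→∞} (1/n) log μ_n^ω(B(x,ε)) = −∞, where B(x,ε) is the closed ball of center x and radius ε. (Theorem 3(2).) -/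
open MeasureTheory ProbabilityTheory Filter Set Real
open scoped ENNReal NNReal Classical Topology

/-- **Theorem 3(2).**
Under (A1), (A2) and (A3), if `x ∉ D_I` (that is, `I(x) = ∞`), then almost surely
`lim_{ε→0⁺} limsup_n (1/n) log μₙ^ω(B(x,ε)) = -I(x) = -∞`. -/
theorem theorem3_part2
    {Ω : Type*} [MeasurableSpace Ω] (P : Measure Ω) [IsProbabilityMeasure P]
    {E : Type*} [MeasurableSpace E]
    {𝒴 : Type*} [NormedAddCommGroup 𝒴] [NormedSpace ℝ 𝒴]
    [MeasurableSpace 𝒴] [BorelSpace 𝒴]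
    -- the stationary process
    (Xseq : Ω → ℕ → E) (hXmeas : Measurable Xseq)
    (hstat : Measure.map (fun ω => fun i => Xseq ω (i + 1)) P = Measure.map Xseq P)
    -- the functionals SₙΦ
    (SΦ : ℕ → (ℕ → E) → 𝒴) (hSΦmeas : ∀ n, Measurable (SΦ n))
    -- the laws μₙ of SₙΦ(X)/n
    (μ : ℕ → Measure 𝒴)
    (hμ : ∀ n, μ n = Measure.map (fun ω => (n : ℝ)⁻¹ • SΦ n (Xseq ω)) P)
    -- (A1): LDP with rate function I
    (I : 𝒴 → ℝ≥0∞) (hIlsc : LowerSemicontinuous I)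
    (hLDP : ∀ Γ : Set 𝒴,
      -(⨅ x ∈ interior Γ, (I x : EReal)) ≤
          Filter.atTop.liminf (fun n : ℕ => ((n : ℝ)⁻¹ : EReal) * ENNReal.log (μ n Γ)) ∧
        Filter.atTop.limsup (fun n : ℕ => ((n : ℝ)⁻¹ : EReal) * ENNReal.log (μ n Γ)) ≤
          -(⨅ x ∈ closure Γ, (I x : EReal)))
    -- (A2): mixing
    (alphaX : ℕ → ℝ) (halpha0 : alphaX 0 = 1 / 2)
    (halpha : ∀ m, 1 ≤ m → alphaX m = ⨆ i : ℕ, sSup {r : ℝ | ∃ A B : Set Ω,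
      MeasurableSet[⨆ kk ∈ Set.Iic i,
        MeasurableSpace.comap (fun ω => Xseq ω kk) inferInstance] A ∧
      MeasurableSet[⨆ jj ∈ Set.Ici (i + m),
        MeasurableSpace.comap (fun ω => Xseq ω jj) inferInstance] B ∧
      r = |(P A).toReal * (P B).toReal - (P (A ∩ B)).toReal|})
    (αinv : ℝ → ℝ≥0∞)
    (hαinv : ∀ u, αinv u = sInf ((fun m : ℕ => (m : ℝ≥0∞)) '' {m | alphaX m ≤ u}))
    (hA2 : ∀ h : ℝ, 0 < h → ∫⁻ u in Set.Ioc (0 : ℝ) 1, (αinv u) ^ h ∂volume < ⊤)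
    -- (A3): approximation by functions of 2n coordinates
    (SΦapp : ℕ → (ℕ → E) → 𝒴)
    (happdep : ∀ n (z z' : ℕ → E), (∀ i < 2 * n, z i = z' i) → SΦapp n z = SΦapp n z')
    (δ : ℕ → ℝ) (hδ0 : Tendsto δ atTop (nhds 0))
    (hδ : ∀ n z, ‖SΦ n z - SΦapp n z‖ ≤ (n : ℝ) * δ n)
    -- the empirical measures μₙ^ω
    (k : ℕ → ℕ) (hkpos : ∀ n, 0 < k n)
    (μω : ℕ → Ω → Measure 𝒴)
    (hμω : ∀ n ω, μω n ω = (k n : ℝ≥0∞)⁻¹ •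
      ∑ j ∈ Finset.Icc 1 (k n),
        Measure.dirac ((n : ℝ)⁻¹ • SΦ n (fun i => Xseq ω (i + (j - 1) * n))))
    -- the point x outside D_I
    (x : 𝒴) (hx : I x = ⊤) :
    ∀ᵐ ω ∂P,
      Tendsto (fun ε : ℝ =>
          Filter.atTop.limsup (fun n : ℕ =>
            ((n : ℝ)⁻¹ : EReal) * ENNReal.log (μω n ω (Metric.closedBall x ε))))
        (nhdsWithin 0 (Set.Ioi 0)) (nhds (⊥ : EReal)) := by
  classical
  -- measurability of shifts
  have shift_meas : ∀ m : ℕ, Measurable (fun z : ℕ → E => (fun i => z (i + m))) :=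
    fun m => measurable_pi_lambda _ (fun i => measurable_pi_apply _)
  have hXshift : ∀ m : ℕ, Measurable (fun ω => fun i => Xseq ω (i + m)) :=
    fun m => (shift_meas m).comp hXmeas
  -- iterated stationarity
  have hstat' : ∀ m : ℕ,
      Measure.map (fun ω => fun i => Xseq ω (i + m)) P = Measure.map Xseq P := by
    intro m
    induction m with
    | zero => simp
    | succ m ih =>
      have hcomp : (fun ω => fun i => Xseq ω (i + (m + 1)))
          = (fun z : ℕ → E => fun i => z (i + m)) ∘ (fun ω => fun i => Xseq ω (i + 1)) := rfl
      rw [hcomp, ← Measure.map_map (shift_meas m) (hXshift 1), hstat,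
        Measure.map_map (shift_meas m) hXmeas]
      exact ih
  -- law of the shifted normalized sums
  have gmeas : ∀ n : ℕ, Measurable (fun z : ℕ → E => (n : ℝ)⁻¹ • SΦ n z) :=
    fun n => (hSΦmeas n).const_smul _
  have hlaw : ∀ n m : ℕ,
      Measure.map (fun ω => (n : ℝ)⁻¹ • SΦ n (fun i => Xseq ω (i + m))) P = μ n := by
    intro n m
    have h1 : (fun ω => (n : ℝ)⁻¹ • SΦ n (fun i => Xseq ω (i + m)))
        = (fun z : ℕ → E => (n : ℝ)⁻¹ • SΦ n z) ∘ (fun ω => fun i => Xseq ω (i + m)) := rfl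
    rw [h1, ← Measure.map_map (gmeas n) (hXshift m), hstat' m,
      Measure.map_map (gmeas n) hXmeas, hμ n]
    rfl
  set pt : ℕ → ℕ → Ω → 𝒴 :=
    fun n j ω => (n : ℝ)⁻¹ • SΦ n (fun i => Xseq ω (i + (j - 1) * n)) with hpt
  have ptmeas : ∀ n j, Measurable (pt n j) := fun n j => (gmeas n).comp (hXshift _)
  have ptlaw : ∀ n j, Measure.map (pt n j) P = μ n := fun n j => hlaw n _
  -- formula for the empirical measure
  have hμωapply : ∀ n ω (s : Set 𝒴), MeasurableSet s →
      μω n ω s = (k n : ℝ≥0∞)⁻¹ *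
        ∑ j ∈ Finset.Icc 1 (k n), (pt n j ⁻¹' s).indicator (fun _ => (1 : ℝ≥0∞)) ω := by
    intro n ω s hs
    rw [hμω n ω, Measure.smul_apply, Measure.finset_sum_apply, smul_eq_mul]
    congr 1
    refine Finset.sum_congr rfl fun j _ => ?_
    rw [Measure.dirac_apply' _ hs]
    by_cases h : pt n j ω ∈ s
    · simp only [Set.indicator_of_mem h, Set.indicator_of_mem (Set.mem_preimage.mpr h),
        Pi.one_apply]
      exact Set.indicator_of_mem h _
    · simp only [Set.indicator_of_notMem h,
        Set.indicator_of_notMem (fun hc => h (Set.mem_preimage.mp hc))]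
      exact Set.indicator_of_notMem h _
  have hμωfun : ∀ n (s : Set 𝒴), MeasurableSet s → (fun ω => μω n ω s)
      = fun ω => (k n : ℝ≥0∞)⁻¹ *
        ∑ j ∈ Finset.Icc 1 (k n), (pt n j ⁻¹' s).indicator (fun _ => (1 : ℝ≥0∞)) ω :=
    fun n s hs => funext fun ω => hμωapply n ω s hs
  have hmeasμω : ∀ n (s : Set 𝒴), MeasurableSet s → Measurable (fun ω => μω n ω s) := by
    intro n s hs
    rw [hμωfun n s hs]
    exact (Finset.measurable_sum _ fun j _ =>
      measurable_const.indicator ((ptmeas n j) hs)).const_mul _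
  -- expectation of the empirical measure
  have hexp : ∀ n (s : Set 𝒴), MeasurableSet s → ∫⁻ ω, μω n ω s ∂P = μ n s := by
    intro n s hs
    rw [hμωfun n s hs, lintegral_const_mul _ (Finset.measurable_sum _ fun j _ =>
      measurable_const.indicator ((ptmeas n j) hs)),
      lintegral_finset_sum _ fun j _ => measurable_const.indicator ((ptmeas n j) hs)]
    have hterm : ∀ j ∈ Finset.Icc 1 (k n),
        ∫⁻ ω, (pt n j ⁻¹' s).indicator (fun _ => (1 : ℝ≥0∞)) ω ∂P = μ n s := by
      intro j _
      rw [lintegral_indicator_const ((ptmeas n j) hs), one_mul,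
        ← Measure.map_apply (ptmeas n j) hs, ptlaw n j]
    rw [Finset.sum_congr rfl hterm, Finset.sum_const, Nat.card_Icc]
    simp only [Nat.add_sub_cancel, nsmul_eq_mul]
    rw [← mul_assoc, ENNReal.inv_mul_cancel (by exact_mod_cast (hkpos n).ne')
      (ENNReal.natCast_ne_top _), one_mul]
  -- the key one-radius estimate
  have key : ∀ r : ℝ, 0 < r → ∃ ε : ℝ, 0 < ε ∧ ∀ᵐ ω ∂P,
      Filter.atTop.limsup (fun n : ℕ =>
        ((n : ℝ)⁻¹ : EReal) * ENNReal.log (μω n ω (Metric.closedBall x ε)))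
        ≤ ((-r : ℝ) : EReal) := by
    intro r hr
    obtain ⟨ε, hεpos, hball⟩ : ∃ ε : ℝ, 0 < ε ∧
        ∀ y ∈ Metric.closedBall x ε, ENNReal.ofReal (r + 2) < I y := by
      have h1 : ∀ᶠ y in 𝓝 x, ENNReal.ofReal (r + 2) < I y :=
        hIlsc x _ (by show ENNReal.ofReal (r + 2) < I x; rw [hx]; exact ENNReal.ofReal_lt_top)
      rw [Metric.eventually_nhds_iff] at h1
      obtain ⟨ε, hε, h⟩ := h1
      exact ⟨ε / 2, by linarith, fun y hy => h (lt_of_le_of_lt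
        (Metric.mem_closedBall.mp hy) (by linarith))⟩
    refine ⟨ε, hεpos, ?_⟩
    set B : Set 𝒴 := Metric.closedBall x ε with hB
    have hBmeas : MeasurableSet B := Metric.isClosed_closedBall.measurableSet
    -- LDP upper bound
    have hup : Filter.atTop.limsup (fun n : ℕ =>
        ((n : ℝ)⁻¹ : EReal) * ENNReal.log (μ n B)) ≤ ((-(r + 2) : ℝ) : EReal) := by
      refine le_trans (hLDP B).2 ?_
      have hinf : ((r + 2 : ℝ) : EReal) ≤ ⨅ y ∈ closure B, (I y : EReal) := by
        rw [Metric.isClosed_closedBall.closure_eq]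
        refine le_iInf₂ fun y hy => ?_
        have h2 := (hball y hy).le
        calc ((r + 2 : ℝ) : EReal) = ((ENNReal.ofReal (r + 2) : ℝ≥0∞) : EReal) := by
              rw [EReal.coe_ennreal_ofReal, max_eq_left (by linarith)]
          _ ≤ (I y : EReal) := EReal.coe_ennreal_le_coe_ennreal_iff.mpr h2
      calc -(⨅ y ∈ closure B, (I y : EReal)) ≤ -((r + 2 : ℝ) : EReal) :=
            EReal.neg_le_neg_iff.mpr hinf
        _ = ((-(r + 2) : ℝ) : EReal) := by rw [EReal.coe_neg]
    -- eventual bound on μ n B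
    have hev : ∀ᶠ n : ℕ in atTop, μ n B ≤ ENNReal.ofReal (Real.exp (-(r + 1) * n)) := by
      have h3 : ∀ᶠ n : ℕ in atTop, ((n : ℝ)⁻¹ : EReal) * ENNReal.log (μ n B)
          < ((-(r + 1) : ℝ) : EReal) :=
        eventually_lt_of_limsup_lt (lt_of_le_of_lt hup
          (EReal.coe_lt_coe_iff.mpr (by linarith)))
      filter_upwards [h3, eventually_ge_atTop 1] with n hn hn1
      have hnpos : (0 : ℝ) < n := by exact_mod_cast hn1
      have h4 : ((n : ℝ) : EReal) * (((n : ℝ)⁻¹ : ℝ) : EReal) = 1 := by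
        rw [← EReal.coe_mul, mul_inv_cancel₀ hnpos.ne', EReal.coe_one]
      have h5 : ENNReal.log (μ n B) ≤ ((-(r + 1) * n : ℝ) : EReal) := by
        calc ENNReal.log (μ n B)
            = ((n : ℝ) : EReal) * ((((n : ℝ)⁻¹ : ℝ) : EReal) * ENNReal.log (μ n B)) := by
              rw [← mul_assoc, h4, one_mul]
          _ ≤ ((n : ℝ) : EReal) * ((-(r + 1) : ℝ) : EReal) :=
              mul_le_mul_of_nonneg_left hn.le (by exact_mod_cast hnpos.le)
          _ = ((-(r + 1) * n : ℝ) : EReal) := by rw [← EReal.coe_mul, mul_comm]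
      calc μ n B = EReal.exp (ENNReal.log (μ n B)) := (ENNReal.exp_log _).symm
        _ ≤ EReal.exp ((-(r + 1) * n : ℝ)) := EReal.exp_monotone h5
        _ = ENNReal.ofReal (Real.exp (-(r + 1) * n)) := rfl
    obtain ⟨N, hN⟩ := eventually_atTop.mp hev
    -- Markov inequality
    set A : ℕ → Set Ω := fun n => {ω | ENNReal.ofReal (Real.exp (-r * n)) ≤ μω n ω B} with hA
    have hmarkov : ∀ n, N ≤ n → P (A n) ≤ ENNReal.ofReal (Real.exp (-(n : ℝ))) := by
      intro n hn
      have h1 := hN n hn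
      have hne0 : ENNReal.ofReal (Real.exp (-r * n)) ≠ 0 := by
        simp [ENNReal.ofReal_eq_zero, not_le, Real.exp_pos]
      have hnetop : ENNReal.ofReal (Real.exp (-r * n)) ≠ ⊤ := ENNReal.ofReal_ne_top
      have h2 := meas_ge_le_lintegral_div (μ := P) (hmeasμω n B hBmeas).aemeasurable hne0 hnetop
      rw [hexp n B hBmeas] at h2
      refine le_trans h2 ?_
      rw [ENNReal.div_le_iff hne0 hnetop]
      refine le_trans h1 ?_
      rw [← ENNReal.ofReal_mul (Real.exp_nonneg _), ← Real.exp_add]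
      exact ENNReal.ofReal_le_ofReal (le_of_eq (by ring_nf))
    -- Borel–Cantelli
    have hsum : ∑' n, P (A n) ≠ ⊤ := by
      set q : ℝ≥0∞ := ENNReal.ofReal (Real.exp (-1)) with hq
      have hq1 : q < 1 := by
        rw [hq, ENNReal.ofReal_lt_one]; exact Real.exp_lt_one_iff.mpr (by norm_num)
      set C : ℝ≥0∞ := ENNReal.ofReal (Real.exp N) with hC
      have hqn : ∀ n : ℕ, q ^ n = ENNReal.ofReal (Real.exp (-(n : ℝ))) := by
        intro n
        rw [hq, ← ENNReal.ofReal_pow (Real.exp_nonneg _), ← Real.exp_nat_mul]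
        norm_num
      have hbound : ∀ n, P (A n) ≤ C * q ^ n := by
        intro n
        rcases le_or_gt N n with h | h
        · refine le_trans (hmarkov n h) ?_
          rw [hqn n]
          conv_lhs => rw [← one_mul (ENNReal.ofReal (Real.exp (-(n : ℝ))))]
          refine mul_le_mul_left ?_ _
          rw [hC]; exact ENNReal.one_le_ofReal.mpr (Real.one_le_exp (by positivity))
        · refine le_trans prob_le_one ?_
          rw [hqn n, hC, ← ENNReal.ofReal_mul (Real.exp_nonneg _), ← Real.exp_add]
          refine ENNReal.one_le_ofReal.mpr (Real.one_le_exp ?_)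
          have : (n : ℝ) ≤ N := by exact_mod_cast h.le
          linarith
      refine ne_top_of_le_ne_top ?_ (ENNReal.tsum_le_tsum hbound)
      rw [ENNReal.tsum_mul_left, ENNReal.tsum_geometric]
      exact (ENNReal.mul_lt_top ENNReal.ofReal_lt_top
        (ENNReal.inv_lt_top.2 (tsub_pos_of_lt hq1))).ne
    have hBC := MeasureTheory.ae_eventually_notMem hsum
    filter_upwards [hBC] with ω hω
    have hfin : ∀ᶠ n : ℕ in atTop,
        ((n : ℝ)⁻¹ : EReal) * ENNReal.log (μω n ω B) ≤ ((-r : ℝ) : EReal) := by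
      filter_upwards [hω, eventually_ge_atTop 1] with n hn hn1
      have hnpos : (0 : ℝ) < n := by exact_mod_cast hn1
      have hlt : μω n ω B < ENNReal.ofReal (Real.exp (-r * n)) := by
        by_contra hc
        exact hn (Set.mem_setOf_eq ▸ not_lt.mp hc)
      have hlog : ENNReal.log (μω n ω B) ≤ ((-r * n : ℝ) : EReal) := by
        have h6 : ENNReal.log (μω n ω B) ≤ ENNReal.log (ENNReal.ofReal (Real.exp (-r * n))) :=
          ENNReal.log_strictMono.monotone hlt.le
        rwa [show ENNReal.ofReal (Real.exp (-r * n)) = EReal.exp ((-r * n : ℝ) : EReal) from rfl,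
          EReal.log_exp] at h6
      calc ((n : ℝ)⁻¹ : EReal) * ENNReal.log (μω n ω B)
          ≤ ((n : ℝ)⁻¹ : EReal) * ((-r * n : ℝ) : EReal) :=
            mul_le_mul_of_nonneg_left hlog
              (EReal.inv_nonneg_of_nonneg (by exact_mod_cast hnpos.le))
        _ = ((-r : ℝ) : EReal) := by
            rw [← EReal.coe_inv, ← EReal.coe_mul]
            congr 1
            field_simp
    exact limsup_le_of_le (by isBoundedDefault) hfin
  -- combine over a countable family of radii
  choose ε hεpos hae using fun M : ℕ => key ((M : ℝ) + 1) (by positivity)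
  rw [← ae_all_iff] at hae
  filter_upwards [hae] with ω hω
  rw [EReal.tendsto_nhds_bot_iff_real]
  intro b
  set M := ⌈-b⌉₊ with hM
  have hMb : (-((M : ℝ) + 1) : ℝ) < b := by
    have h7 : -b ≤ (M : ℝ) := Nat.le_ceil (-b)
    linarith
  have hev2 : ∀ᶠ ε' in 𝓝[>] (0 : ℝ), ε' < ε M :=
    (gt_mem_nhds (hεpos M)).filter_mono nhdsWithin_le_nhds
  filter_upwards [hev2] with ε' hε'
  have hmono : Filter.atTop.limsup (fun n : ℕ =>
        ((n : ℝ)⁻¹ : EReal) * ENNReal.log (μω n ω (Metric.closedBall x ε')))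
      ≤ Filter.atTop.limsup (fun n : ℕ =>
        ((n : ℝ)⁻¹ : EReal) * ENNReal.log (μω n ω (Metric.closedBall x (ε M)))) := by
    refine limsup_le_limsup (Eventually.of_forall fun n => ?_)
    exact mul_le_mul_of_nonneg_left
      (ENNReal.log_strictMono.monotone
        (measure_mono (Metric.closedBall_subset_closedBall hε'.le)))
      (EReal.inv_nonneg_of_nonneg (by exact_mod_cast (Nat.cast_nonneg n : (0:ℝ) ≤ n)))
  calc Filter.atTop.limsup (fun n : ℕ =>
        ((n : ℝ)⁻¹ : EReal) * ENNReal.log (μω n ω (Metric.closedBall x ε')))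
      ≤ Filter.atTop.limsup (fun n : ℕ =>
        ((n : ℝ)⁻¹ : EReal) * ENNReal.log (μω n ω (Metric.closedBall x (ε M)))) := hmono
    _ ≤ ((-((M : ℝ) + 1) : ℝ) : EReal) := hω M
    _ < ((b : ℝ) : EReal) := EReal.coe_lt_coe_iff.mpr hMb
end

section
/- Assume (A1), (A2) and (A3). If the sequence (μ_n)_{n≥1} is exponentially tight, then with probability 1 the sequence (μ_n^ω)_{n≥1} is exponentially tight. (Theorem 3(3).) -/
open MeasureTheory ProbabilityTheory Filter Set Real
open scoped ENNReal NNReal Classical Topology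

/-- **Theorem 3(3).**
Under (A1), (A2) and (A3), if `(μₙ)` is exponentially tight, then almost surely
`(μₙ^ω)` is exponentially tight. -/
theorem theorem3_part3
    {Ω : Type*} [MeasurableSpace Ω] (P : Measure Ω) [IsProbabilityMeasure P]
    {E : Type*} [MeasurableSpace E]
    {𝒴 : Type*} [NormedAddCommGroup 𝒴] [NormedSpace ℝ 𝒴]
    [MeasurableSpace 𝒴] [BorelSpace 𝒴]
    -- the stationary process
    (Xseq : Ω → ℕ → E) (hXmeas : Measurable Xseq)
    (hstat : Measure.map (fun ω => fun i => Xseq ω (i + 1)) P = Measure.map Xseq P)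
    -- the functionals SₙΦ
    (SΦ : ℕ → (ℕ → E) → 𝒴) (hSΦmeas : ∀ n, Measurable (SΦ n))
    -- the laws μₙ of SₙΦ(X)/n
    (μ : ℕ → Measure 𝒴)
    (hμ : ∀ n, μ n = Measure.map (fun ω => (n : ℝ)⁻¹ • SΦ n (Xseq ω)) P)
    -- (A1): LDP with rate function I
    (I : 𝒴 → ℝ≥0∞) (hIlsc : LowerSemicontinuous I)
    (hLDP : ∀ Γ : Set 𝒴,
      -(⨅ x ∈ interior Γ, (I x : EReal)) ≤
          Filter.atTop.liminf (fun n : ℕ => ((n : ℝ)⁻¹ : EReal) * ENNReal.log (μ n Γ)) ∧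
        Filter.atTop.limsup (fun n : ℕ => ((n : ℝ)⁻¹ : EReal) * ENNReal.log (μ n Γ)) ≤
          -(⨅ x ∈ closure Γ, (I x : EReal)))
    -- (A2): mixing
    (alphaX : ℕ → ℝ) (halpha0 : alphaX 0 = 1 / 2)
    (halpha : ∀ m, 1 ≤ m → alphaX m = ⨆ i : ℕ, sSup {r : ℝ | ∃ A B : Set Ω,
      MeasurableSet[⨆ kk ∈ Set.Iic i,
        MeasurableSpace.comap (fun ω => Xseq ω kk) inferInstance] A ∧
      MeasurableSet[⨆ jj ∈ Set.Ici (i + m),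
        MeasurableSpace.comap (fun ω => Xseq ω jj) inferInstance] B ∧
      r = |(P A).toReal * (P B).toReal - (P (A ∩ B)).toReal|})
    (αinv : ℝ → ℝ≥0∞)
    (hαinv : ∀ u, αinv u = sInf ((fun m : ℕ => (m : ℝ≥0∞)) '' {m | alphaX m ≤ u}))
    (hA2 : ∀ h : ℝ, 0 < h → ∫⁻ u in Set.Ioc (0 : ℝ) 1, (αinv u) ^ h ∂volume < ⊤)
    -- (A3): approximation by functions of 2n coordinates
    (SΦapp : ℕ → (ℕ → E) → 𝒴)
    (happdep : ∀ n (z z' : ℕ → E), (∀ i < 2 * n, z i = z' i) → SΦapp n z = SΦapp n z')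
    (δ : ℕ → ℝ) (hδ0 : Tendsto δ atTop (nhds 0))
    (hδ : ∀ n z, ‖SΦ n z - SΦapp n z‖ ≤ (n : ℝ) * δ n)
    -- the empirical measures μₙ^ω
    (k : ℕ → ℕ) (hkpos : ∀ n, 0 < k n)
    (μω : ℕ → Ω → Measure 𝒴)
    (hμω : ∀ n ω, μω n ω = (k n : ℝ≥0∞)⁻¹ •
      ∑ j ∈ Finset.Icc 1 (k n),
        Measure.dirac ((n : ℝ)⁻¹ • SΦ n (fun i => Xseq ω (i + (j - 1) * n))))
    -- exponential tightness of (μₙ)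
    (htight : ∀ α : ℝ, ∃ K : Set 𝒴, IsCompact K ∧
      Filter.atTop.limsup (fun n : ℕ => ((n : ℝ)⁻¹ : EReal) * ENNReal.log (μ n Kᶜ)) ≤
        ((-α : ℝ) : EReal)) :
    ∀ᵐ ω ∂P, ∀ α : ℝ, ∃ K : Set 𝒴, IsCompact K ∧
      Filter.atTop.limsup (fun n : ℕ => ((n : ℝ)⁻¹ : EReal) * ENNReal.log (μω n ω Kᶜ)) ≤
        ((-α : ℝ) : EReal) := by
  classical
  -- the shift maps on path space
  set sft : ℕ → (ℕ → E) → (ℕ → E) := fun m z i => z (i + m) with hsft_def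
  have hsft_meas : ∀ m, Measurable (sft m) := fun m =>
    measurable_pi_lambda _ fun i => measurable_pi_apply _
  -- stationarity of shifted blocks
  have hshift : ∀ m : ℕ, Measure.map (sft m ∘ Xseq) P = Measure.map Xseq P := by
    intro m
    induction m with
    | zero =>
      have : sft 0 ∘ Xseq = Xseq := by funext ω; funext i; simp [hsft_def]
      rw [this]
    | succ m ih =>
      have h1 : sft (m + 1) ∘ Xseq = sft m ∘ (sft 1 ∘ Xseq) := by
        funext ω; funext i
        simp only [Function.comp, hsft_def]
        ring_nf
      have h2 : (sft 1 ∘ Xseq) = fun ω => fun i => Xseq ω (i + 1) := rfl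
      have h3 : Measurable (sft 1 ∘ Xseq) := (hsft_meas 1).comp hXmeas
      rw [h1, ← Measure.map_map (hsft_meas m) h3, h2, hstat,
        Measure.map_map (hsft_meas m) hXmeas, ih]
  -- the points of the empirical measures, and their laws
  set pt : ℕ → ℕ → Ω → 𝒴 :=
    fun n j ω => (n : ℝ)⁻¹ • SΦ n (fun i => Xseq ω (i + (j - 1) * n)) with hpt_def
  have hg_meas : ∀ n : ℕ, Measurable (fun z : ℕ → E => (n : ℝ)⁻¹ • SΦ n z) := fun n =>
    (continuous_const_smul ((n : ℝ)⁻¹)).measurable.comp (hSΦmeas n)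
  have hpt_meas : ∀ n j, Measurable (pt n j) := fun n j =>
    (hg_meas n).comp ((hsft_meas ((j - 1) * n)).comp hXmeas)
  have hlaw : ∀ n j, Measure.map (pt n j) P = μ n := by
    intro n j
    have h1 : pt n j = (fun z : ℕ → E => (n : ℝ)⁻¹ • SΦ n z) ∘ (sft ((j - 1) * n) ∘ Xseq) := rfl
    rw [h1, ← Measure.map_map (hg_meas n) ((hsft_meas _).comp hXmeas), hshift,
      Measure.map_map (hg_meas n) hXmeas, hμ n]
    rfl
  -- the key per-level statement
  have key : ∀ m : ℕ, ∀ᵐ ω ∂P, ∃ K : Set 𝒴, IsCompact K ∧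
      Filter.atTop.limsup (fun n : ℕ => ((n : ℝ)⁻¹ : EReal) * ENNReal.log (μω n ω Kᶜ)) ≤
        ((-(m : ℝ) : ℝ) : EReal) := by
    intro m
    obtain ⟨K, hK, hKlim⟩ := htight ((m : ℝ) + 1)
    have hKc : MeasurableSet Kᶜ := hK.isClosed.measurableSet.compl
    set c : ℝ := -(m : ℝ) - 1/2 with hc_def
    -- eventually, μ n Kᶜ < exp (c n)
    have henv : ∀ᶠ n : ℕ in atTop, μ n Kᶜ < ENNReal.ofReal (Real.exp (c * n)) := by
      have hlt : Filter.atTop.limsup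
          (fun n : ℕ => ((n : ℝ)⁻¹ : EReal) * ENNReal.log (μ n Kᶜ)) < (c : EReal) := by
        refine lt_of_le_of_lt hKlim ?_
        exact EReal.coe_lt_coe_iff.2 (by rw [hc_def]; push_cast; linarith)
      filter_upwards [eventually_lt_of_limsup_lt hlt, eventually_ge_atTop 1] with n hn hn1
      by_contra hcon
      push_neg at hcon
      have h1 : ((c * n : ℝ) : EReal) ≤ ENNReal.log (μ n Kᶜ) := by
        rw [← Real.log_exp (c * n), ← ENNReal.log_ofReal_of_pos (Real.exp_pos _)]
        exact ENNReal.log_monotone hcon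
      have h2 : ((n : ℝ)⁻¹ : EReal) * ((c * n : ℝ) : EReal) ≤
          ((n : ℝ)⁻¹ : EReal) * ENNReal.log (μ n Kᶜ) :=
        mul_le_mul_of_nonneg_left h1
          (EReal.inv_nonneg_of_nonneg (EReal.coe_nonneg.2 (Nat.cast_nonneg n)))
      rw [← EReal.coe_inv, ← EReal.coe_mul] at h2
      have hne : (n : ℝ) ≠ 0 := Nat.cast_ne_zero.2 (by omega)
      have h3 : (n : ℝ)⁻¹ * (c * n) = c := by field_simp
      rw [h3] at h2
      exact absurd hn (not_lt.2 h2)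
    obtain ⟨N, hN⟩ := eventually_atTop.1 henv
    -- the empirical mass of Kᶜ
    have hFn_eq : ∀ n ω, μω n ω Kᶜ =
        (k n : ℝ≥0∞)⁻¹ * ∑ j ∈ Finset.Icc 1 (k n), Kᶜ.indicator 1 (pt n j ω) := by
      intro n ω
      rw [hμω n ω, Measure.smul_apply, Measure.finset_sum_apply, smul_eq_mul]
      congr 1
      refine Finset.sum_congr rfl fun j _ => ?_
      rw [Measure.dirac_apply' _ hKc]
    have hFn_meas : ∀ n, Measurable (fun ω => μω n ω Kᶜ) := by
      intro n
      simp only [hFn_eq]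
      exact (Finset.measurable_sum _ fun j _ =>
        (measurable_one.indicator hKc).comp (hpt_meas n j)).const_mul _
    -- expectation of the empirical mass equals μ n Kᶜ
    have hint : ∀ n, ∫⁻ ω, μω n ω Kᶜ ∂P = μ n Kᶜ := by
      intro n
      simp only [hFn_eq]
      have hj : ∀ j : ℕ, Measurable fun ω => (Kᶜ.indicator 1 (pt n j ω) : ℝ≥0∞) := fun j =>
        (measurable_one.indicator hKc).comp (hpt_meas n j)
      have hms : Measurable fun ω =>
          ∑ j ∈ Finset.Icc 1 (k n), (Kᶜ.indicator 1 (pt n j ω) : ℝ≥0∞) :=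
        Finset.measurable_sum _ fun j _ => hj j
      rw [lintegral_const_mul _ hms, lintegral_finset_sum _ fun j _ => hj j]
      have hjl : ∀ j ∈ Finset.Icc 1 (k n),
          ∫⁻ ω, Kᶜ.indicator 1 (pt n j ω) ∂P = μ n Kᶜ := by
        intro j _
        rw [← lintegral_map (measurable_one.indicator hKc) (hpt_meas n j), hlaw n j,
          lintegral_indicator_one hKc]
      rw [Finset.sum_congr rfl hjl, Finset.sum_const, Nat.card_Icc]
      simp only [Nat.add_sub_cancel, nsmul_eq_mul, ← mul_assoc]
      rw [ENNReal.inv_mul_cancel (Nat.cast_ne_zero.2 (hkpos n).ne') (ENNReal.natCast_ne_top _),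
        one_mul]
    -- Borel–Cantelli
    set A : ℕ → Set Ω :=
      fun n => {ω | ENNReal.ofReal (Real.exp (-(m : ℝ) * n)) ≤ μω n ω Kᶜ} with hA_def
    have hmarkov : ∀ n, P (A n) ≤ μ n Kᶜ * ENNReal.ofReal (Real.exp ((m : ℝ) * n)) := by
      intro n
      have h1 := meas_ge_le_lintegral_div (μ := P) (hFn_meas n).aemeasurable
        (ε := ENNReal.ofReal (Real.exp (-(m : ℝ) * n)))
        (ENNReal.ofReal_pos.2 (Real.exp_pos _)).ne' ENNReal.ofReal_ne_top
      have hexp : (Real.exp (-(m : ℝ) * n))⁻¹ = Real.exp ((m : ℝ) * n) := by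
        rw [← Real.exp_neg]; congr 1; ring
      rw [hint n, div_eq_mul_inv, ← ENNReal.ofReal_inv_of_pos (Real.exp_pos _),
        hexp] at h1
      exact h1
    have hsum : ∑' n, P (A n) ≠ ∞ := by
      have hbound : ∀ n, P (A n) ≤
          ENNReal.ofReal (Real.exp ((N : ℝ)/2)) * ENNReal.ofReal (Real.exp (-(1:ℝ)/2)) ^ n := by
        intro n
        have hpow : ENNReal.ofReal (Real.exp (-(1:ℝ)/2)) ^ n
            = ENNReal.ofReal (Real.exp (-(n : ℝ)/2)) := by
          rw [← ENNReal.ofReal_pow (Real.exp_pos _).le, ← Real.exp_nat_mul]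
          ring_nf
        rw [hpow, ← ENNReal.ofReal_mul (Real.exp_pos _).le, ← Real.exp_add]
        rcases le_or_gt N n with hn | hn
        · refine (hmarkov n).trans ?_
          refine le_trans (mul_le_mul_left (hN n hn).le _) ?_
          rw [← ENNReal.ofReal_mul (Real.exp_pos _).le, ← Real.exp_add]
          refine ENNReal.ofReal_le_ofReal (Real.exp_le_exp.2 ?_)
          have hn' : (0:ℝ) ≤ (N:ℝ) := Nat.cast_nonneg N
          rw [hc_def]; ring_nf; linarith
        · refine le_trans (measure_mono (Set.subset_univ _)) ?_
          rw [measure_univ]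
          refine ENNReal.one_le_ofReal.2 (Real.one_le_exp ?_)
          have : (n : ℝ) ≤ (N : ℝ) := by exact_mod_cast hn.le
          linarith
      refine ne_top_of_le_ne_top ?_ (ENNReal.tsum_le_tsum hbound)
      rw [ENNReal.tsum_mul_left, ENNReal.tsum_geometric]
      refine ENNReal.mul_ne_top ENNReal.ofReal_ne_top ?_
      rw [Ne, ENNReal.inv_eq_top, tsub_eq_zero_iff_le, not_le]
      exact ENNReal.ofReal_lt_one.2 (Real.exp_lt_one_iff.2 (by norm_num))
    filter_upwards [MeasureTheory.ae_eventually_notMem hsum] with ω hω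
    refine ⟨K, hK, ?_⟩
    refine Filter.limsup_le_of_le (by isBoundedDefault) ?_
    filter_upwards [hω, eventually_ge_atTop 1] with n hn hn1
    have hlt : μω n ω Kᶜ ≤ ENNReal.ofReal (Real.exp (-(m : ℝ) * n)) := by
      have := hn; rw [hA_def] at this
      exact (not_le.1 this).le
    have h1 : ENNReal.log (μω n ω Kᶜ) ≤ ((-(m : ℝ) * n : ℝ) : EReal) := by
      rw [← Real.log_exp (-(m : ℝ) * n), ← ENNReal.log_ofReal_of_pos (Real.exp_pos _)]
      exact ENNReal.log_monotone hlt
    have h2 : ((n : ℝ)⁻¹ : EReal) * ENNReal.log (μω n ω Kᶜ) ≤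
        ((n : ℝ)⁻¹ : EReal) * ((-(m : ℝ) * n : ℝ) : EReal) :=
      mul_le_mul_of_nonneg_left h1
        (EReal.inv_nonneg_of_nonneg (EReal.coe_nonneg.2 (Nat.cast_nonneg n)))
    refine h2.trans ?_
    rw [← EReal.coe_inv, ← EReal.coe_mul]
    have hne : (n : ℝ) ≠ 0 := Nat.cast_ne_zero.2 (by omega)
    have h3 : (n : ℝ)⁻¹ * (-(m : ℝ) * n) = -(m : ℝ) := by field_simp
    rw [h3]
  -- combine over all m
  filter_upwards [ae_all_iff.2 key] with ω hω α
  obtain ⟨K, hK, hlim⟩ := hω ⌈α⌉₊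
  refine ⟨K, hK, hlim.trans ?_⟩
  exact_mod_cast EReal.coe_le_coe_iff.2 (neg_le_neg (Nat.le_ceil α))
end

section
/- Assume (A1'), (A2) and (A3). Let λ₀ ∈ D be a point at which Λ is differentiable and set x₀ = ∇Λ(λ₀). If limsup_{n→∞} (log k(n))/n < Λ*(x₀), then there exists ε > 0 such that, with probability 1, for all n large enough the set {1 ≤ j ≤ k(n) : S_nΦ(T^{(j−1)n}X(ω))/n ∈ B(x₀,ε)} is empty, where B(x₀,ε) is the closed ball of center x₀ and radius ε. (Theorem 5(2), second part.) -/
open MeasureTheory ProbabilityTheory Filter Set Real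
open scoped ENNReal NNReal Classical Topology RealInnerProductSpace

namespace Thm5Aux

variable {Ω : Type*} [MeasurableSpace Ω]

lemma holder_exp (μ : Measure Ω) {a b : Ω → ℝ} (ha : Measurable a) (hb : Measurable b)
    {t : ℝ} (ht0 : 0 < t) (ht1 : t < 1) :
    ∫⁻ ω, ENNReal.ofReal (Real.exp (t * a ω + (1-t) * b ω)) ∂μ ≤
      (∫⁻ ω, ENNReal.ofReal (Real.exp (a ω)) ∂μ) ^ t *
      (∫⁻ ω, ENNReal.ofReal (Real.exp (b ω)) ∂μ) ^ (1-t) := by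
  have h1t : (0:ℝ) < 1 - t := by linarith
  have hpq : Real.HolderConjugate (1/t) (1/(1-t)) :=
    Real.holderConjugate_one_div ht0 h1t (by ring)
  set f : Ω → ℝ≥0∞ := fun ω => (ENNReal.ofReal (Real.exp (a ω))) ^ t with hf
  set g : Ω → ℝ≥0∞ := fun ω => (ENNReal.ofReal (Real.exp (b ω))) ^ (1-t) with hg
  have key : ∀ ω, ENNReal.ofReal (Real.exp (t * a ω + (1-t) * b ω)) = f ω * g ω := by
    intro ω
    rw [hf, hg]
    simp only
    rw [Real.exp_add, ENNReal.ofReal_mul (Real.exp_nonneg _), mul_comm t (a ω),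
      mul_comm (1-t) (b ω), Real.exp_mul, Real.exp_mul,
      ENNReal.ofReal_rpow_of_pos (Real.exp_pos _), ENNReal.ofReal_rpow_of_pos (Real.exp_pos _)]
  have hfm : AEMeasurable f μ :=
    ((ha.exp.ennreal_ofReal).pow_const t).aemeasurable
  have hgm : AEMeasurable g μ :=
    ((hb.exp.ennreal_ofReal).pow_const (1-t)).aemeasurable
  calc ∫⁻ ω, ENNReal.ofReal (Real.exp (t * a ω + (1-t) * b ω)) ∂μ
      = ∫⁻ ω, f ω * g ω ∂μ := lintegral_congr key
    _ ≤ (∫⁻ ω, f ω ^ (1/t) ∂μ) ^ (1/(1/t)) * (∫⁻ ω, g ω ^ (1/(1-t)) ∂μ) ^ (1/(1/(1-t))) :=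
        ENNReal.lintegral_mul_le_Lp_mul_Lq μ hpq hfm hgm
    _ = (∫⁻ ω, ENNReal.ofReal (Real.exp (a ω)) ∂μ) ^ t *
        (∫⁻ ω, ENNReal.ofReal (Real.exp (b ω)) ∂μ) ^ (1-t) := by
        rw [one_div_one_div, one_div_one_div]
        congr 1
        · congr 1
          refine lintegral_congr fun ω => ?_
          rw [hf]; simp only
          rw [← ENNReal.rpow_mul, mul_one_div, div_self ht0.ne', ENNReal.rpow_one]
        · congr 1
          refine lintegral_congr fun ω => ?_
          rw [hg]; simp only
          rw [← ENNReal.rpow_mul, mul_one_div, div_self h1t.ne', ENNReal.rpow_one]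

lemma shift_law {E : Type*} [MeasurableSpace E] (P : Measure Ω)
    (X : Ω → ℕ → E) (hX : Measurable X)
    (hstat : Measure.map (fun ω => fun i => X ω (i + 1)) P = Measure.map X P) :
    ∀ m : ℕ, Measure.map (fun ω => fun i => X ω (i + m)) P = Measure.map X P := by
  intro m
  induction m with
  | zero => simp
  | succ m ih =>
    have hshift : Measurable (fun (z : ℕ → E) => fun i => z (i + m)) :=
      measurable_pi_lambda _ fun i => measurable_pi_apply _
    have hX1 : Measurable (fun ω => fun i => X ω (i + 1)) :=
      measurable_pi_lambda _ fun i => (measurable_pi_apply _).comp hX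
    have heq : (fun ω => fun i => X ω (i + (m+1))) =
        (fun (z : ℕ → E) => fun i => z (i + m)) ∘ (fun ω => fun i => X ω (i + 1)) := by
      funext ω i; simp [Function.comp]; ring_nf
    rw [heq, ← Measure.map_map hshift hX1, hstat, Measure.map_map hshift hX]
    exact ih

lemma ereal_extract {n : ℕ} (hn : 1 ≤ n) {x : ℝ≥0∞} {lo hi : ℝ}
    (h : ((((n:ℝ))⁻¹ : ℝ) : EReal) * ENNReal.log x ∈ Set.Ioo ((lo:ℝ):EReal) ((hi:ℝ):EReal)) :
    x ≠ 0 ∧ x ≠ ⊤ ∧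
      (((n:ℝ)⁻¹ : ℝ) : EReal) * ENNReal.log x
        = (((n:ℝ)⁻¹ * Real.log x.toReal : ℝ) : EReal) ∧
      lo < (n:ℝ)⁻¹ * Real.log x.toReal ∧ (n:ℝ)⁻¹ * Real.log x.toReal < hi := by
  have hnpos : (0:ℝ) < (n:ℝ)⁻¹ := by positivity
  rcases eq_or_ne x 0 with rfl | hx0
  · exfalso
    rw [ENNReal.log_zero, EReal.coe_mul_bot_of_pos hnpos] at h
    exact absurd h.1 (by simp)
  rcases eq_or_ne x ⊤ with rfl | hxt
  · exfalso
    rw [ENNReal.log_top, EReal.coe_mul_top_of_pos hnpos] at h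
    exact absurd h.2 (by simp)
  have hlog : ENNReal.log x = ((Real.log x.toReal : ℝ) : EReal) :=
    ENNReal.log_pos_real hx0 hxt
  rw [hlog, ← EReal.coe_mul] at h
  exact ⟨hx0, hxt, by rw [hlog, ← EReal.coe_mul],
    EReal.coe_lt_coe_iff.1 h.1, EReal.coe_lt_coe_iff.1 h.2⟩

end Thm5Aux

open Thm5Aux

/-- **Theorem 5(2), second part.**
Under (A1'), (A2), (A3), if `λ₀ ∈ D`, `Λ` is differentiable at `λ₀` with `x₀ = ∇Λ(λ₀)`,
and `limsup (log k(n))/n < Λ*(x₀)`, then there is `ε > 0` such that almost surely, for all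
large `n`, the set `{1 ≤ j ≤ k(n) : SₙΦ(T^{(j-1)n}X(ω))/n ∈ B(x₀,ε)}` is empty. -/
theorem theorem5_part2_second
    {Ω : Type*} [MeasurableSpace Ω] (P : Measure Ω) [IsProbabilityMeasure P]
    {E : Type*} [MeasurableSpace E] (d : ℕ)
    -- the stationary process
    (Xseq : Ω → ℕ → E) (hXmeas : Measurable Xseq)
    (hstat : Measure.map (fun ω => fun i => Xseq ω (i + 1)) P = Measure.map Xseq P)
    -- the ℝ^d-valued functionals SₙΦ
    (SΦ : ℕ → (ℕ → E) → EuclideanSpace ℝ (Fin d)) (hSΦmeas : ∀ n, Measurable (SΦ n))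
    -- the logarithmic moment generating functions Λₙ
    (Lmgf : ℕ → EuclideanSpace ℝ (Fin d) → EReal)
    (hLmgf : ∀ n lam, Lmgf n lam = ((n : ℝ)⁻¹ : EReal) *
      ENNReal.log (∫⁻ ω, ENNReal.ofReal (Real.exp ⟪lam, SΦ n (Xseq ω)⟫) ∂P))
    -- (A1'): Λₙ → Λ, finite on a convex open set D
    (D : Set (EuclideanSpace ℝ (Fin d))) (hDopen : IsOpen D) (hDconv : Convex ℝ D)
    (Λ : EuclideanSpace ℝ (Fin d) → ℝ)
    (hΛ : ∀ lam ∈ D, Tendsto (fun n => Lmgf n lam) atTop (nhds ((Λ lam : ℝ) : EReal)))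
    -- the Fenchel-Legendre transform of Λ
    (Λstar : EuclideanSpace ℝ (Fin d) → ℝ)
    (hΛstar : ∀ x, Λstar x = ⨆ lam : D, (⟪(lam : EuclideanSpace ℝ (Fin d)), x⟫ - Λ lam))
    -- (A2): mixing
    (alphaX : ℕ → ℝ) (halpha0 : alphaX 0 = 1 / 2)
    (halpha : ∀ m, 1 ≤ m → alphaX m = ⨆ i : ℕ, sSup {r : ℝ | ∃ A B : Set Ω,
      MeasurableSet[⨆ kk ∈ Set.Iic i,
        MeasurableSpace.comap (fun ω => Xseq ω kk) inferInstance] A ∧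
      MeasurableSet[⨆ jj ∈ Set.Ici (i + m),
        MeasurableSpace.comap (fun ω => Xseq ω jj) inferInstance] B ∧
      r = |(P A).toReal * (P B).toReal - (P (A ∩ B)).toReal|})
    (αinv : ℝ → ℝ≥0∞)
    (hαinv : ∀ u, αinv u = sInf ((fun m : ℕ => (m : ℝ≥0∞)) '' {m | alphaX m ≤ u}))
    (hA2 : ∀ h : ℝ, 0 < h → ∫⁻ u in Set.Ioc (0 : ℝ) 1, (αinv u) ^ h ∂volume < ⊤)
    -- (A3): approximation by functions of 2n coordinates
    (SΦapp : ℕ → (ℕ → E) → EuclideanSpace ℝ (Fin d))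
    (happdep : ∀ n (z z' : ℕ → E), (∀ i < 2 * n, z i = z' i) → SΦapp n z = SΦapp n z')
    (δ : ℕ → ℝ) (hδ0 : Tendsto δ atTop (nhds 0))
    (hδ : ∀ n z, ‖SΦ n z - SΦapp n z‖ ≤ (n : ℝ) * δ n)
    -- the sequence k(n)
    (k : ℕ → ℕ) (hkpos : ∀ n, 0 < k n)
    -- λ₀ ∈ D at which Λ is differentiable, with gradient x₀
    (lam₀ : EuclideanSpace ℝ (Fin d)) (hlam₀ : lam₀ ∈ D)
    (x₀ : EuclideanSpace ℝ (Fin d)) (hx₀ : HasGradientAt Λ x₀ lam₀)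
    (hlimsup : Filter.atTop.limsup (fun n => ((Real.log (k n) / n : ℝ) : EReal)) <
      (Λstar x₀ : EReal)) :
    ∃ ε > (0 : ℝ), ∀ᵐ ω ∂P, ∀ᶠ n in atTop, ∀ j ∈ Finset.Icc 1 (k n),
      (n : ℝ)⁻¹ • SΦ n (fun i => Xseq ω (i + (j - 1) * n)) ∉ Metric.closedBall x₀ ε := by
  classical
  set I : ℕ → EuclideanSpace ℝ (Fin d) → ℝ≥0∞ :=
    fun n lam => ∫⁻ ω, ENNReal.ofReal (Real.exp ⟪lam, SΦ n (Xseq ω)⟫) ∂P with hI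
  have hinner_meas : ∀ (n : ℕ) (lam : EuclideanSpace ℝ (Fin d)),
      Measurable (fun ω => ⟪lam, SΦ n (Xseq ω)⟫) := fun n lam =>
    measurable_const.inner ((hSΦmeas n).comp hXmeas)
  set r : ℕ → EuclideanSpace ℝ (Fin d) → ℝ :=
    fun n lam => (n:ℝ)⁻¹ * Real.log (I n lam).toReal with hr
  -- Step A: eventual real representation and bounds
  have hrep : ∀ lam ∈ D, ∀ η : ℝ, 0 < η → ∀ᶠ n in atTop,
      I n lam ≠ 0 ∧ I n lam ≠ ⊤ ∧ Lmgf n lam = ((r n lam : ℝ) : EReal) ∧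
      Λ lam - η < r n lam ∧ r n lam < Λ lam + η := by
    intro lam hlam η hη
    have hmem : ((Λ lam : ℝ) : EReal) ∈ Set.Ioo ((Λ lam - η : ℝ) : EReal) ((Λ lam + η : ℝ) : EReal) :=
      ⟨EReal.coe_lt_coe_iff.2 (by linarith), EReal.coe_lt_coe_iff.2 (by linarith)⟩
    have hev := (hΛ lam hlam).eventually (isOpen_Ioo.eventually_mem hmem)
    filter_upwards [hev, eventually_ge_atTop 1] with n hn hn1
    rw [hLmgf n lam] at hn
    obtain ⟨h0, ht, heq, hlo, hhi⟩ := ereal_extract hn1 hn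
    exact ⟨h0, ht, by rw [hLmgf n lam]; exact heq, hlo, hhi⟩
  -- real convergence
  have hreal : ∀ lam ∈ D, Tendsto (fun n => r n lam) atTop (nhds (Λ lam)) := by
    intro lam hlam
    rw [← EReal.tendsto_coe]
    refine (hΛ lam hlam).congr' ?_
    filter_upwards [hrep lam hlam 1 one_pos] with n hn
    exact hn.2.2.1
  -- Step B: convexity along segments through lam₀
  have hconv : ∀ lam ∈ D, ∀ t : ℝ, 0 < t → t < 1 →
      Λ (lam₀ + t • (lam - lam₀)) ≤ t * Λ lam + (1-t) * Λ lam₀ := by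
    intro lam hlam t ht0 ht1
    set lt : EuclideanSpace ℝ (Fin d) := lam₀ + t • (lam - lam₀) with hlt
    have hltD : lt ∈ D := by
      have : lt = t • lam + (1-t) • lam₀ := by
        rw [hlt]; ring_nf; module
      rw [this]
      exact hDconv hlam hlam₀ ht0.le (by linarith) (by ring)
    -- Hölder inequality for each n
    have hhold : ∀ n : ℕ, I n lt ≤ (I n lam) ^ t * (I n lam₀) ^ (1-t) := by
      intro n
      have := holder_exp P (hinner_meas n lam) (hinner_meas n lam₀) ht0 ht1
      refine le_trans (le_of_eq ?_) this
      refine lintegral_congr fun ω => ?_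
      congr 1
      rw [hlt]
      rw [inner_add_left, real_inner_smul_left, inner_sub_left]
      ring
    -- eventual real inequality
    have hev : ∀ᶠ n in atTop, r n lt ≤ t * r n lam + (1-t) * r n lam₀ := by
      filter_upwards [hrep lam hlam 1 one_pos, hrep lam₀ hlam₀ 1 one_pos,
        hrep lt hltD 1 one_pos, eventually_ge_atTop 1] with n h1 h2 h3 hn1
      obtain ⟨ha0, hat, -, -, -⟩ := h1
      obtain ⟨hb0, hbt, -, -, -⟩ := h2
      obtain ⟨hc0, hct, -, -, -⟩ := h3
      have hapos : 0 < (I n lam).toReal := ENNReal.toReal_pos ha0 hat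
      have hbpos : 0 < (I n lam₀).toReal := ENNReal.toReal_pos hb0 hbt
      have hcpos : 0 < (I n lt).toReal := ENNReal.toReal_pos hc0 hct
      have hrhs_ne_top : (I n lam) ^ t * (I n lam₀) ^ (1-t) ≠ ⊤ :=
        ENNReal.mul_ne_top
          (ENNReal.rpow_ne_top_of_nonneg ht0.le hat)
          (ENNReal.rpow_ne_top_of_nonneg (by linarith) hbt)
      have hle : (I n lt).toReal ≤ ((I n lam) ^ t * (I n lam₀) ^ (1-t)).toReal :=
        ENNReal.toReal_mono hrhs_ne_top (hhold n)
      have hre : ((I n lam) ^ t * (I n lam₀) ^ (1-t)).toReal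
          = (I n lam).toReal ^ t * (I n lam₀).toReal ^ (1-t) := by
        rw [ENNReal.toReal_mul, ENNReal.toReal_rpow, ENNReal.toReal_rpow]
      rw [hre] at hle
      have hlog : Real.log (I n lt).toReal ≤
          t * Real.log (I n lam).toReal + (1-t) * Real.log (I n lam₀).toReal := by
        calc Real.log (I n lt).toReal
            ≤ Real.log ((I n lam).toReal ^ t * (I n lam₀).toReal ^ (1-t)) :=
              Real.log_le_log hcpos hle
          _ = t * Real.log (I n lam).toReal + (1-t) * Real.log (I n lam₀).toReal := by
              rw [Real.log_mul (by positivity) (by positivity),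
                Real.log_rpow hapos, Real.log_rpow hbpos]
      have hninv : (0:ℝ) ≤ (n:ℝ)⁻¹ := by positivity
      have := mul_le_mul_of_nonneg_left hlog hninv
      simp only [hr]
      calc (n:ℝ)⁻¹ * Real.log (I n lt).toReal
          ≤ (n:ℝ)⁻¹ * (t * Real.log (I n lam).toReal + (1-t) * Real.log (I n lam₀).toReal) := this
        _ = t * ((n:ℝ)⁻¹ * Real.log (I n lam).toReal)
            + (1-t) * ((n:ℝ)⁻¹ * Real.log (I n lam₀).toReal) := by ring
    exact le_of_tendsto_of_tendsto (hreal lt hltD)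
      (((hreal lam hlam).const_mul t).add ((hreal lam₀ hlam₀).const_mul (1-t))) hev
  -- Step C: subgradient inequality
  have hsub : ∀ lam ∈ D, ⟪lam, x₀⟫ - Λ lam ≤ ⟪lam₀, x₀⟫ - Λ lam₀ := by
    intro lam hlam
    set v : EuclideanSpace ℝ (Fin d) := lam - lam₀ with hv
    have hder : HasDerivAt (fun t : ℝ => Λ (lam₀ + t • v)) ⟪x₀, v⟫ 0 := by
      have h1 : HasDerivAt (fun t : ℝ => lam₀ + t • v) v 0 := by
        simpa using ((hasDerivAt_id (0:ℝ)).smul_const v).const_add lam₀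
      have h2 : HasFDerivAt Λ (InnerProductSpace.toDual ℝ _ x₀) (lam₀ + (0:ℝ) • v) := by
        simpa using hx₀.hasFDerivAt
      have := h2.comp_hasDerivAt 0 h1
      simp only [InnerProductSpace.toDual_apply_apply] at this
      exact this
    have hslope : Tendsto (slope (fun t : ℝ => Λ (lam₀ + t • v)) 0) (𝓝[>] 0)
        (nhds ⟪x₀, v⟫) :=
      (hasDerivAt_iff_tendsto_slope.1 hder).mono_left
        (nhdsWithin_mono 0 fun x hx => ne_of_gt hx)
    have hbound : ⟪x₀, v⟫ ≤ Λ lam - Λ lam₀ := by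
      refine le_of_tendsto hslope ?_
      filter_upwards [Ioo_mem_nhdsGT_of_mem (Set.mem_Ico.2 ⟨le_refl (0:ℝ), one_pos⟩)]
        with t ht
      obtain ⟨ht0, ht1⟩ := ht
      have hc := hconv lam hlam t ht0 ht1
      rw [slope_def_field]
      simp only [zero_smul, add_zero, sub_zero]
      rw [div_le_iff₀ ht0]
      nlinarith [hc]
    have hinner : ⟪x₀, v⟫ = ⟪lam, x₀⟫ - ⟪lam₀, x₀⟫ := by
      rw [hv, inner_sub_right, real_inner_comm lam x₀, real_inner_comm lam₀ x₀]
    linarith [hbound, hinner.symm.le, hinner.le]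
  -- Step D
  have hstar_le : Λstar x₀ ≤ ⟪lam₀, x₀⟫ - Λ lam₀ := by
    rw [hΛstar]
    haveI : Nonempty D := ⟨⟨lam₀, hlam₀⟩⟩
    exact ciSup_le fun lam => hsub lam.1 lam.2
  -- Step E: pick L
  obtain ⟨L, hL1, hL2⟩ : ∃ L : ℝ,
      (∀ᶠ n in atTop, Real.log (k n) / n < L) ∧ L < Λstar x₀ := by
    have h0 : (0 : EReal) ≤ atTop.limsup (fun n => ((Real.log (k n) / n : ℝ) : EReal)) := by
      refine le_limsup_of_frequently_le (Frequently.of_forall fun n => ?_)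
      have h1 : (0:ℝ) ≤ Real.log (k n) / n := by
        apply div_nonneg (Real.log_nonneg ?_) (Nat.cast_nonneg n)
        exact_mod_cast hkpos n
      exact_mod_cast h1
    obtain ⟨z, hz1, hz2⟩ := exists_between hlimsup
    have hzbot : z ≠ ⊥ := (h0.trans_lt hz1).ne_bot
    have hztop : z ≠ ⊤ := hz2.ne_top
    lift z to ℝ using ⟨hztop, hzbot⟩ with L
    refine ⟨L, ?_, ?_⟩
    · filter_upwards [eventually_lt_of_limsup_lt hz1] with n hn
      exact_mod_cast hn
    · exact_mod_cast hz2
  -- Step F: choose ε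
  set G : ℝ := Λstar x₀ - L with hG
  have hGpos : 0 < G := by simp [hG]; linarith
  set ε : ℝ := min 1 (G / (3 * (‖lam₀‖ + 1))) with hε
  have hεpos : 0 < ε := by
    refine lt_min one_pos ?_
    positivity
  refine ⟨ε, hεpos, ?_⟩
  set c : ℝ := ⟪lam₀, x₀⟫ - ‖lam₀‖ * ε with hc
  have hεG : ‖lam₀‖ * ε ≤ G / 3 := by
    have h1 : ‖lam₀‖ / (‖lam₀‖ + 1) ≤ 1 := by
      rw [div_le_one (by positivity)]; linarith [norm_nonneg lam₀]
    have h2 : ‖lam₀‖ * (G / (3 * (‖lam₀‖ + 1))) = G / 3 * (‖lam₀‖ / (‖lam₀‖ + 1)) := by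
      field_simp
    calc ‖lam₀‖ * ε ≤ ‖lam₀‖ * (G / (3 * (‖lam₀‖ + 1))) :=
          mul_le_mul_of_nonneg_left (min_le_right _ _) (norm_nonneg _)
      _ = G / 3 * (‖lam₀‖ / (‖lam₀‖ + 1)) := h2
      _ ≤ G / 3 * 1 := mul_le_mul_of_nonneg_left h1 (by positivity)
      _ = G / 3 := mul_one _
  have hinnerlb : ∀ n : ℕ, 1 ≤ n → ∀ z : ℕ → E,
      (n:ℝ)⁻¹ • SΦ n z ∈ Metric.closedBall x₀ ε → (n:ℝ) * c ≤ ⟪lam₀, SΦ n z⟫ := by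
    intro n hn z hz
    set y : EuclideanSpace ℝ (Fin d) := (n:ℝ)⁻¹ • SΦ n z with hy
    have hdist : ‖y - x₀‖ ≤ ε := by
      rw [← dist_eq_norm]; exact Metric.mem_closedBall.1 hz
    have hCS : |⟪lam₀, y - x₀⟫| ≤ ‖lam₀‖ * ‖y - x₀‖ := abs_real_inner_le_norm _ _
    have h2 : ‖lam₀‖ * ‖y - x₀‖ ≤ ‖lam₀‖ * ε := mul_le_mul_of_nonneg_left hdist (norm_nonneg _)
    have h3 := abs_le.1 hCS
    have h4 : ⟪lam₀, y⟫ - ⟪lam₀, x₀⟫ = ⟪lam₀, y - x₀⟫ := by rw [inner_sub_right]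
    have h1 : c ≤ ⟪lam₀, y⟫ := by rw [hc]; linarith [h3.1]
    have hnne : (n:ℝ) ≠ 0 := by positivity
    have hS : ⟪lam₀, SΦ n z⟫ = (n:ℝ) * ⟪lam₀, y⟫ := by
      rw [hy, real_inner_smul_right]
      field_simp
    rw [hS]
    exact mul_le_mul_of_nonneg_left h1 (Nat.cast_nonneg n)
  have hBmeas : ∀ n : ℕ,
      MeasurableSet {z : ℕ → E | (n:ℝ)⁻¹ • SΦ n z ∈ Metric.closedBall x₀ ε} :=
    fun n => ((hSΦmeas n).const_smul ((n:ℝ)⁻¹)) Metric.isClosed_closedBall.measurableSet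
  have hchern : ∀ᶠ (n : ℕ) in atTop, ∀ m : ℕ,
      P ((fun ω => fun i => Xseq ω (i + m)) ⁻¹'
          {z : ℕ → E | (n:ℝ)⁻¹ • SΦ n z ∈ Metric.closedBall x₀ ε})
        ≤ ENNReal.ofReal (Real.exp (-(n:ℝ) * (L + G/3))) := by
    filter_upwards [hrep lam₀ hlam₀ (G/3) (by positivity), eventually_ge_atTop 1]
      with n hnrep hn1
    obtain ⟨h0, htop, -, -, hhi⟩ := hnrep
    intro m
    have hXm : Measurable (fun ω => fun i => Xseq ω (i + m)) :=
      measurable_pi_lambda _ fun i => (measurable_pi_apply _).comp hXmeas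
    rw [← Measure.map_apply hXm (hBmeas n), shift_law P Xseq hXmeas hstat m,
      Measure.map_apply hXmeas (hBmeas n)]
    set B : Set Ω := Xseq ⁻¹' {z | (n:ℝ)⁻¹ • SΦ n z ∈ Metric.closedBall x₀ ε} with hB
    have key : ENNReal.ofReal (Real.exp ((n:ℝ) * c)) * P B ≤ I n lam₀ := by
      calc ENNReal.ofReal (Real.exp ((n:ℝ)*c)) * P B
          = ∫⁻ _ω in B, ENNReal.ofReal (Real.exp ((n:ℝ)*c)) ∂P := by
            rw [setLIntegral_const, mul_comm]
        _ ≤ ∫⁻ ω in B, ENNReal.ofReal (Real.exp ⟪lam₀, SΦ n (Xseq ω)⟫) ∂P := by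
            refine setLIntegral_mono ((hinner_meas n lam₀).exp.ennreal_ofReal) fun ω hω => ?_
            exact ENNReal.ofReal_le_ofReal (Real.exp_le_exp.2 (hinnerlb n hn1 (Xseq ω) hω))
        _ ≤ I n lam₀ := setLIntegral_le_lintegral _ _
    have hnpos : (0:ℝ) < n := by exact_mod_cast hn1
    have hIbound : I n lam₀ ≤ ENNReal.ofReal (Real.exp ((n:ℝ) * (Λ lam₀ + G/3))) := by
      have hlog : Real.log (I n lam₀).toReal ≤ (n:ℝ) * (Λ lam₀ + G/3) := by
        have h2 : (n:ℝ)⁻¹ * Real.log (I n lam₀).toReal < Λ lam₀ + G/3 := hhi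
        calc Real.log (I n lam₀).toReal
            = (n:ℝ) * ((n:ℝ)⁻¹ * Real.log (I n lam₀).toReal) := by field_simp
          _ ≤ (n:ℝ) * (Λ lam₀ + G/3) := mul_le_mul_of_nonneg_left h2.le hnpos.le
      have hpos : 0 < (I n lam₀).toReal := ENNReal.toReal_pos h0 htop
      have htoReal : (I n lam₀).toReal ≤ Real.exp ((n:ℝ) * (Λ lam₀ + G/3)) := by
        calc (I n lam₀).toReal = Real.exp (Real.log (I n lam₀).toReal) :=
              (Real.exp_log hpos).symm
          _ ≤ _ := Real.exp_le_exp.2 hlog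
      calc I n lam₀ = ENNReal.ofReal (I n lam₀).toReal := (ENNReal.ofReal_toReal htop).symm
        _ ≤ _ := ENNReal.ofReal_le_ofReal htoReal
    have hP : P B ≤ ENNReal.ofReal (Real.exp ((n:ℝ)*(Λ lam₀ + G/3) - (n:ℝ)*c)) := by
      have hexp_ne0 : ENNReal.ofReal (Real.exp ((n:ℝ)*c)) ≠ 0 := by
        simp [ENNReal.ofReal_eq_zero, not_le, Real.exp_pos]
      have hexp_netop : ENNReal.ofReal (Real.exp ((n:ℝ)*c)) ≠ ⊤ := ENNReal.ofReal_ne_top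
      have hdiv : P B ≤ ENNReal.ofReal (Real.exp ((n:ℝ)*(Λ lam₀ + G/3)))
          / ENNReal.ofReal (Real.exp ((n:ℝ)*c)) := by
        rw [ENNReal.le_div_iff_mul_le (Or.inl hexp_ne0) (Or.inl hexp_netop)]
        rw [mul_comm]
        exact key.trans hIbound
      refine hdiv.trans (le_of_eq ?_)
      rw [← ENNReal.ofReal_div_of_pos (Real.exp_pos _), ← Real.exp_sub]
    refine hP.trans (ENNReal.ofReal_le_ofReal (Real.exp_le_exp.2 ?_))
    have hscal : Λ lam₀ + G/3 - c ≤ -(L + G/3) := by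
      rw [hc]
      have hGdef : Λstar x₀ = L + G := by rw [hG]; ring
      linarith [hstar_le, hεG]
    have hmul := mul_le_mul_of_nonneg_left hscal (Nat.cast_nonneg n : (0:ℝ) ≤ n)
    nlinarith [hmul]
  have hkexp : ∀ᶠ (n : ℕ) in atTop, ((k n : ℝ)) ≤ Real.exp ((n:ℝ) * L) := by
    filter_upwards [hL1, eventually_ge_atTop 1] with n hn hn1
    have hnpos : (0:ℝ) < n := by exact_mod_cast hn1
    have hlogk : Real.log (k n) ≤ (n:ℝ) * L := by
      rw [div_lt_iff₀ hnpos] at hn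
      linarith [hn]
    calc (k n : ℝ) = Real.exp (Real.log (k n)) :=
          (Real.exp_log (by exact_mod_cast hkpos n)).symm
      _ ≤ _ := Real.exp_le_exp.2 hlogk
  obtain ⟨N, hN⟩ := eventually_atTop.1 (hchern.and hkexp)
  set s : ℕ → Set Ω := fun n => if N ≤ n then
      ⋃ j ∈ Finset.Icc 1 (k n), ((fun ω => fun i => Xseq ω (i + (j-1) * n)) ⁻¹'
        {z : ℕ → E | (n:ℝ)⁻¹ • SΦ n z ∈ Metric.closedBall x₀ ε}) else ∅ with hs
  have hsum : ∀ n, P (s n) ≤ ENNReal.ofReal (Real.exp (-(n:ℝ) * (G/3))) := by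
    intro n
    rw [hs]
    simp only
    by_cases hn : N ≤ n
    · rw [if_pos hn]
      obtain ⟨hch, hke⟩ := hN n hn
      refine le_trans (measure_biUnion_finset_le _ _) ?_
      have hstep : ∀ j ∈ Finset.Icc 1 (k n),
          P ((fun ω => fun i => Xseq ω (i + (j-1) * n)) ⁻¹'
            {z : ℕ → E | (n:ℝ)⁻¹ • SΦ n z ∈ Metric.closedBall x₀ ε})
          ≤ ENNReal.ofReal (Real.exp (-(n:ℝ)*(L+G/3))) := fun j _ => hch ((j-1)*n)
      refine le_trans (Finset.sum_le_sum hstep) ?_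
      rw [Finset.sum_const, Nat.card_Icc]
      simp only [Nat.add_sub_cancel, nsmul_eq_mul]
      calc (k n : ℝ≥0∞) * ENNReal.ofReal (Real.exp (-(n:ℝ)*(L+G/3)))
          ≤ ENNReal.ofReal (Real.exp ((n:ℝ)*L)) * ENNReal.ofReal (Real.exp (-(n:ℝ)*(L+G/3))) := by
            gcongr
            rw [← ENNReal.ofReal_natCast]
            exact ENNReal.ofReal_le_ofReal hke
        _ = ENNReal.ofReal (Real.exp (-(n:ℝ) * (G/3))) := by
            rw [← ENNReal.ofReal_mul (Real.exp_nonneg _), ← Real.exp_add]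
            congr 2
            ring
    · rw [if_neg hn]; simp
  have htsum : (∑' n, P (s n)) ≠ ⊤ := by
    have hre : ∀ n : ℕ, ENNReal.ofReal (Real.exp (-(n:ℝ)*(G/3)))
        = (ENNReal.ofReal (Real.exp (-(G/3))))^n := by
      intro n
      rw [← ENNReal.ofReal_pow (Real.exp_nonneg _), ← Real.exp_nat_mul]
      congr 2
      ring
    have hgeom : (∑' n : ℕ, ENNReal.ofReal (Real.exp (-(n:ℝ) * (G/3)))) ≠ ⊤ := by
      rw [tsum_congr hre, ENNReal.tsum_geometric]
      refine ENNReal.inv_ne_top.2 ?_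
      have hlt : ENNReal.ofReal (Real.exp (-(G/3))) < 1 :=
        ENNReal.ofReal_lt_one.2 (Real.exp_lt_one_iff.2 (by linarith))
      rw [Ne, tsub_eq_zero_iff_le, not_le]
      exact hlt
    exact ne_top_of_le_ne_top hgeom (ENNReal.tsum_le_tsum hsum)
  have hBC := MeasureTheory.ae_eventually_notMem htsum
  filter_upwards [hBC] with ω hω
  filter_upwards [hω, eventually_ge_atTop N] with n hn hnN
  intro j hj hmem
  refine hn ?_
  rw [hs]
  simp only [if_pos hnN]
  exact Set.mem_biUnion hj hmem
end

section
/- Let m ≥ 2 be an integer, let D = (D_i)_{i≥1} be a sequence of digits in {0,…,m−1}, and let φ : Σ_m → ℝ be continuous. Suppose that for every increasing sequence (k(n))_{n≥1} of positive integers with liminf_{n→∞} (log k(n))/n > log m, and for every ε > 0, one has (1/k(n)) · #{1 ≤ j ≤ k(n) : |S_nφ(T^{(j−1)n}D)/n − ∫φ dν| > ε} → 0 as n → ∞. Then lim_{p→∞} S_pφ(D)/p = ∫φ dν. In particular, if this hypothesis holds for every continuous φ, the number Σ_{i≥1} D_i m^{−i} is normal in base m. (This is the content of the theorem stating that Property (𝒫)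 implies normality.) -/
open MeasureTheory ProbabilityTheory Filter Set Real
open scoped ENNReal NNReal Classical Topology

/-- Property (𝒫) for the digit sequence `D`, relative to a single continuous potential
`ψ` on `Σ_m`: for every increasing sequence `k(n)` of positive integers with
`liminf (log k(n))/n > log m` and every `ε > 0`, the proportion of blocks
`1 ≤ j ≤ k(n)` for which the Birkhoff average `S_nψ(T^{(j-1)n}D)/n` is `ε`-far from
`∫ ψ dν` tends to `0` (this expresses the LDP-induced concentration of the empirical
measures `μₙ^D` at `∫ ψ dν`). -/
def PropertyP (m : ℕ) (D : ℕ → Fin m) (ν : Measure (ℕ → Fin m))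
    (ψ : (ℕ → Fin m) → ℝ) : Prop :=
  ∀ k : ℕ → ℕ, StrictMono k → (∀ n, 0 < k n) →
    ((Real.log m : ℝ) : EReal) <
      Filter.atTop.liminf (fun n => ((Real.log (k n) / n : ℝ) : EReal)) →
    ∀ ε > (0 : ℝ),
      Tendsto (fun n =>
          (((Finset.Icc 1 (k n)).filter (fun j =>
            ε < |(∑ i ∈ Finset.range n, ψ (fun r => D (r + (i + (j - 1) * n)))) / n -
              ∫ t, ψ t ∂ν|)).card : ℝ) / (k n))
        atTop (nhds 0)

lemma propP_geo (m : ℕ) (hm : 2 ≤ m) (D : ℕ → Fin m)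
    (ν : Measure (ℕ → Fin m))
    (φ : (ℕ → Fin m) → ℝ) (hP : PropertyP m D ν φ) (b : ℕ) (hb : 1 ≤ b) :
    ∀ ε > (0:ℝ), Tendsto (fun n =>
          (((Finset.Icc 1 (b * (2*m)^n)).filter (fun j =>
            ε < |(∑ i ∈ Finset.range n, φ (fun r => D (r + (i + (j - 1) * n)))) / n -
              ∫ t, φ t ∂ν|)).card : ℝ) / ((b * (2*m)^n : ℕ) : ℝ))
        atTop (nhds 0) := by
  have h2m : 1 < 2 * m := by omega
  have hsm : StrictMono (fun n => b * (2*m)^n) := fun x y hxy =>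
    (Nat.mul_lt_mul_left (show 0 < b by omega)).mpr (Nat.pow_lt_pow_right h2m hxy)
  have hpos : ∀ n, 0 < b * (2*m)^n := fun n =>
    Nat.mul_pos (by omega) (Nat.pow_pos (by omega))
  have hliminf : ((Real.log m : ℝ) : EReal) <
      Filter.atTop.liminf (fun n : ℕ => ((Real.log ((b * (2*m)^n : ℕ)) / (n:ℝ) : ℝ) : EReal)) := by
    have hmR : (2:ℝ) ≤ m := by exact_mod_cast hm
    have hlt : ((Real.log m : ℝ) : EReal) < ((Real.log (2*(m:ℝ)) : ℝ) : EReal) :=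
      EReal.coe_lt_coe_iff.mpr (Real.log_lt_log (by linarith) (by linarith))
    refine lt_of_lt_of_le hlt (Filter.le_liminf_of_le (by isBoundedDefault) ?_)
    filter_upwards [eventually_ge_atTop 1] with n hn
    have hn1 : (1:ℝ) ≤ (n:ℝ) := by exact_mod_cast hn
    have hbR : (1:ℝ) ≤ (b:ℝ) := by exact_mod_cast hb
    have hkey : Real.log (2*(m:ℝ)) ≤ Real.log ((b * (2*m)^n : ℕ)) / (n:ℝ) := by
      have hcast : (((b * (2*m)^n : ℕ)) : ℝ) = (b:ℝ) * (2*(m:ℝ))^n := by push_cast; ring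
      have hlogc : Real.log (((b * (2*m)^n : ℕ)) : ℝ)
          = Real.log b + n * Real.log (2*(m:ℝ)) := by
        rw [hcast, Real.log_mul (x := (b:ℝ)) (ne_of_gt (by positivity)) (ne_of_gt (by positivity)),
          Real.log_pow]
      rw [hlogc]
      have hlb : 0 ≤ Real.log b := Real.log_nonneg hbR
      have hl2m : 0 ≤ Real.log (2*(m:ℝ)) := Real.log_nonneg (by linarith)
      rw [le_div_iff₀ (by linarith)]
      nlinarith
    exact_mod_cast EReal.coe_le_coe_iff.mpr hkey
  intro ε hε
  exact hP (fun n => b * (2*m)^n) hsm hpos hliminf ε hε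


private lemma sum_blocks (f : ℕ → ℝ) (q n : ℕ) :
    ∑ i ∈ Finset.range (q * n), f i
      = ∑ j ∈ Finset.range q, ∑ i ∈ Finset.range n, f (i + j * n) := by
  induction q with
  | zero => simp
  | succ q ih =>
    rw [Nat.succ_mul, Finset.sum_range_add, ih, Finset.sum_range_succ]
    congr 1
    exact Finset.sum_congr rfl fun i _ => by rw [Nat.add_comm]

private lemma card_filter_Icc (P : ℕ → Prop) [DecidablePred P] (q : ℕ) :
    ((Finset.Icc 1 q).filter P).card = ((Finset.range q).filter (fun j => P (j+1))).card := by
  apply Finset.card_bij' (fun j _ => j - 1) (fun j _ => j + 1)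
  · intro a ha
    simp only [Finset.mem_filter, Finset.mem_Icc] at ha
    omega
  · intro a _; omega
  · intro a ha
    simp only [Finset.mem_filter, Finset.mem_Icc, Finset.mem_range] at ha ⊢
    obtain ⟨⟨h1, h2⟩, h3⟩ := ha
    refine ⟨by omega, ?_⟩
    rwa [Nat.sub_add_cancel h1]
  · intro a ha
    simp only [Finset.mem_filter, Finset.mem_Icc, Finset.mem_range] at ha ⊢
    exact ⟨⟨by omega, by omega⟩, ha.2⟩


set_option maxHeartbeats 1000000 in
lemma key_est (c : ℕ) (hc : 4 ≤ c) (g : ℕ → ℝ) (I C : ℝ) (hC1 : 1 ≤ C)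
    (hg : ∀ i, |g i| ≤ C) (hI : |I| ≤ C)
    (hbad : ∀ ε > (0:ℝ), ∀ ε' > (0:ℝ), ∀ᶠ n in atTop, ∀ b ∈ Finset.Icc 1 (2*c),
      (((Finset.Icc 1 (b * c^n)).filter (fun j =>
         ε < |(∑ i ∈ Finset.range n, g (i + (j-1)*n)) / n - I|)).card : ℝ)
        ≤ ε' * ((b * c^n : ℕ) : ℝ)) :
    Tendsto (fun p => (∑ i ∈ Finset.range p, g i) / p) atTop (nhds I) := by
  have hCpos : (0:ℝ) < C := by linarith
  rw [Metric.tendsto_atTop]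
  intro δ hδ
  set ε' : ℝ := δ / (24 * C) with hε'def
  have hε'pos : 0 < ε' := by positivity
  obtain ⟨N₀, hN₀⟩ := (hbad (δ/6) (by linarith) ε' hε'pos).exists_forall_of_atTop
  obtain ⟨M₁, hM₁⟩ := pow_unbounded_of_one_lt (R := ℝ) (12*C/δ)
    (show (1:ℝ) < (c:ℝ) by exact_mod_cast (by omega : 1 < c))
  set M := max (max N₀ M₁) 1 with hMdef
  refine ⟨M * c^M, fun p hp => ?_⟩
  have hcpos : 0 < c := by omega
  set n := Nat.findGreatest (fun k => k * c^k ≤ p) p with hndef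
  have hMle : M ≤ M * c^M := Nat.le_mul_of_pos_right _ (Nat.pow_pos hcpos)
  have hMp : M ≤ p := le_trans hMle hp
  have hMn : M ≤ n := by rw [hndef]; exact Nat.le_findGreatest (P := fun k => k * c^k ≤ p) hMp hp
  have hn1 : 1 ≤ n := le_trans (le_max_right _ 1) hMn
  have hnp : n * c^n ≤ p := by
    have := Nat.findGreatest_spec (P := fun k => k * c^k ≤ p) hMp hp
    rwa [← hndef] at this
  have hppos : 0 < p := lt_of_lt_of_le (Nat.mul_pos (by omega) (Nat.pow_pos hcpos)) hnp
  have hup : p < (n+1) * c^(n+1) := by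
    by_cases h : n + 1 ≤ p
    · have hgt := Nat.findGreatest_is_greatest (P := fun k => k * c^k ≤ p) (n := p)
        (k := n+1) (by rw [← hndef]; omega) h
      simp only [not_le] at hgt
      exact hgt
    · exact lt_of_lt_of_le (by omega) (Nat.le_mul_of_pos_right _ (Nat.pow_pos hcpos))
  set q := p / n with hqdef
  have hqn : q * n ≤ p := Nat.div_mul_le_self p n
  have hqr : q * n + p % n = p := Nat.div_add_mod' p n
  have hrn : p % n < n := Nat.mod_lt p (by omega)
  have hq1 : c^n ≤ q := (Nat.le_div_iff_mul_le (by omega)).mpr (by rwa [Nat.mul_comm])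
  have hq2 : q < 2*c*c^n := by
    have h2 : (n+1) * c^(n+1) ≤ n * (2*c*c^n) := by
      calc (n+1) * c^(n+1) ≤ (2*n) * c^(n+1) := Nat.mul_le_mul_right _ (by omega)
      _ = n * (2*c*c^n) := by rw [pow_succ]; ring
    have h3 : n * q < n * (2*c*c^n) := by
      rw [Nat.mul_comm n q]
      exact lt_of_le_of_lt hqn (lt_of_lt_of_le hup h2)
    exact Nat.lt_of_mul_lt_mul_left h3
  set b := q / c^n + 1 with hbdef
  have hEpos : 0 < c^n := Nat.pow_pos hcpos
  have h4 : q / c^n * c^n + q % c^n = q := Nat.div_add_mod' q (c^n)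
  have h5 : q % c^n < c^n := Nat.mod_lt q hEpos
  have hEq : q ≤ b * c^n := by
    calc q = q / c^n * c^n + q % c^n := h4.symm
    _ ≤ q / c^n * c^n + c^n := Nat.add_le_add_left (le_of_lt h5) _
    _ = b * c^n := by rw [hbdef]; ring
  have hb8 : b ≤ 2*c := by
    have hqd : q / c^n < 2*c := (Nat.div_lt_iff_lt_mul hEpos).mpr (by
      calc q < 2*c*c^n := hq2
      _ = 2*c * c^n := rfl)
    omega
  have hbE2q : b * c^n ≤ 2 * q := by
    have h6 : q / c^n * c^n ≤ q := Nat.div_mul_le_self q _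
    calc b * c^n = q / c^n * c^n + c^n := by rw [hbdef]; ring
    _ ≤ q + q := Nat.add_le_add h6 hq1
    _ = 2*q := by ring
  clear_value n q b
  -- bad-block count bound
  have hNn : N₀ ≤ n := le_trans (le_trans (le_max_left _ _) (le_max_left _ 1)) hMn
  have hbmem : b ∈ Finset.Icc 1 (2*c) := Finset.mem_Icc.mpr ⟨by rw [hbdef]; exact Nat.le_add_left 1 _, hb8⟩
  have hbadE := hN₀ n hNn b hbmem
  have hqpos : 0 < q := lt_of_lt_of_le hEpos hq1
  have hcard : (((Finset.Icc 1 q).filter (fun j => δ/6 < |(∑ i ∈ Finset.range n, g (i + (j-1)*n)) / n - I|)).card : ℝ) ≤ 2 * ε' * q := by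
    have hsub : ((Finset.Icc 1 q).filter (fun j => δ/6 < |(∑ i ∈ Finset.range n, g (i + (j-1)*n)) / n - I|)).card
        ≤ ((Finset.Icc 1 (b * c^n)).filter (fun j => δ/6 < |(∑ i ∈ Finset.range n, g (i + (j-1)*n)) / n - I|)).card :=
      Finset.card_le_card (Finset.filter_subset_filter _ (Finset.Icc_subset_Icc_right hEq))
    have h2q : ((b * c^n : ℕ) : ℝ) ≤ 2 * (q:ℝ) := by exact_mod_cast hbE2q
    calc (((Finset.Icc 1 q).filter (fun j => δ/6 < |(∑ i ∈ Finset.range n, g (i + (j-1)*n)) / n - I|)).card : ℝ)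
        ≤ (((Finset.Icc 1 (b * c^n)).filter (fun j => δ/6 < |(∑ i ∈ Finset.range n, g (i + (j-1)*n)) / n - I|)).card : ℝ) := by exact_mod_cast hsub
    _ ≤ ε' * ((b * c^n : ℕ) : ℝ) := hbadE
    _ ≤ ε' * (2*(q:ℝ)) := by nlinarith
    _ = 2 * ε' * q := by ring
  -- block decomposition
  have hsplit : ∑ i ∈ Finset.range p, g i
      = (∑ j ∈ Finset.range q, ∑ i ∈ Finset.range n, g (i + j*n))
        + ∑ i ∈ Finset.range (p % n), g (q*n + i) := by
    conv_lhs => rw [← hqr]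
    rw [Finset.sum_range_add, sum_blocks]
  have hnR : (0:ℝ) < (n:ℝ) := by exact_mod_cast (by omega : 0 < n)
  have hblock : ∀ j ∈ Finset.range q,
      |(∑ i ∈ Finset.range n, g (i + j*n)) - (n:ℝ) * I|
        ≤ δ/6 * n + (if (δ/6 < |(∑ i ∈ Finset.range n, g (i + ((j+1)-1)*n)) / n - I|) then 2*C*n else 0) := by
    intro j _
    by_cases hB : δ/6 < |(∑ i ∈ Finset.range n, g (i + ((j+1)-1)*n)) / n - I|
    · rw [if_pos hB]
      have h1 : |∑ i ∈ Finset.range n, g (i + j*n)| ≤ C * n := by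
        calc |∑ i ∈ Finset.range n, g (i + j*n)| ≤ ∑ i ∈ Finset.range n, |g (i + j*n)| :=
          Finset.abs_sum_le_sum_abs _ _
        _ ≤ ∑ i ∈ Finset.range n, C := Finset.sum_le_sum (fun i _ => hg _)
        _ = C * n := by rw [Finset.sum_const, Finset.card_range]; simp [mul_comm]
      have h2 : |(n:ℝ) * I| ≤ C * n := by
        rw [abs_mul, Nat.abs_cast]
        calc (n:ℝ) * |I| ≤ (n:ℝ) * C := mul_le_mul_of_nonneg_left hI (by positivity)
        _ = C * n := by ring
      calc |(∑ i ∈ Finset.range n, g (i + j*n)) - (n:ℝ)*I|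
          ≤ |∑ i ∈ Finset.range n, g (i + j*n)| + |(n:ℝ)*I| := abs_sub _ _
      _ ≤ C*n + C*n := add_le_add h1 h2
      _ ≤ δ/6*n + 2*C*n := by
        have hh : (0:ℝ) ≤ δ/6*n := by positivity
        linarith
    · rw [if_neg hB, add_zero]
      push_neg at hB
      have hj' : (j+1)-1 = j := by omega
      rw [hj'] at hB
      have habs : |(∑ i ∈ Finset.range n, g (i + j*n)) - (n:ℝ)*I|
          = (n:ℝ) * |(∑ i ∈ Finset.range n, g (i + j*n))/n - I| := by
        rw [← abs_of_pos hnR, ← abs_mul]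
        congr 1
        field_simp
        rw [abs_of_pos hnR]; ring
      rw [habs]
      calc (n:ℝ) * |(∑ i ∈ Finset.range n, g (i + j*n))/n - I| ≤ (n:ℝ) * (δ/6) := by
            exact mul_le_mul_of_nonneg_left hB (by positivity)
      _ = δ/6 * n := by ring
  have hsum1 : |(∑ j ∈ Finset.range q, ∑ i ∈ Finset.range n, g (i + j*n)) - (q:ℝ)*(n:ℝ)*I|
      ≤ δ/6*((q:ℝ)*n) + 2*C*n * (((Finset.Icc 1 q).filter (fun j => δ/6 < |(∑ i ∈ Finset.range n, g (i + (j-1)*n)) / n - I|)).card : ℝ) := by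
    have e1 : (∑ j ∈ Finset.range q, ∑ i ∈ Finset.range n, g (i + j*n)) - (q:ℝ)*(n:ℝ)*I
        = ∑ j ∈ Finset.range q, ((∑ i ∈ Finset.range n, g (i + j*n)) - (n:ℝ)*I) := by
      rw [Finset.sum_sub_distrib, Finset.sum_const, Finset.card_range, nsmul_eq_mul]
      ring
    rw [e1]
    calc |∑ j ∈ Finset.range q, ((∑ i ∈ Finset.range n, g (i + j*n)) - (n:ℝ)*I)|
        ≤ ∑ j ∈ Finset.range q, |(∑ i ∈ Finset.range n, g (i + j*n)) - (n:ℝ)*I| :=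
          Finset.abs_sum_le_sum_abs _ _
    _ ≤ ∑ j ∈ Finset.range q, (δ/6 * n + (if (δ/6 < |(∑ i ∈ Finset.range n, g (i + ((j+1)-1)*n)) / n - I|) then 2*C*n else 0)) :=
          Finset.sum_le_sum hblock
    _ = (q:ℝ)*(δ/6*n) + ∑ j ∈ Finset.range q, (if (δ/6 < |(∑ i ∈ Finset.range n, g (i + ((j+1)-1)*n)) / n - I|) then 2*C*n else 0) := by
          rw [Finset.sum_add_distrib, Finset.sum_const, Finset.card_range, nsmul_eq_mul]
    _ = δ/6*((q:ℝ)*n) + 2*C*n * (((Finset.Icc 1 q).filter (fun j => δ/6 < |(∑ i ∈ Finset.range n, g (i + (j-1)*n)) / n - I|)).card : ℝ) := by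
          rw [card_filter_Icc (fun j => δ/6 < |(∑ i ∈ Finset.range n, g (i + (j-1)*n)) / n - I|) q]
          rw [← Finset.sum_filter]
          rw [Finset.sum_const, nsmul_eq_mul]
          ring
  have htail : |(∑ i ∈ Finset.range (p % n), g (q*n + i)) - ((p % n : ℕ):ℝ)*I| ≤ 2*C*n := by
    have hrnR : ((p % n : ℕ):ℝ) ≤ (n:ℝ) := by exact_mod_cast le_of_lt hrn
    have h1 : |∑ i ∈ Finset.range (p % n), g (q*n + i)| ≤ C * n := by
      calc |∑ i ∈ Finset.range (p % n), g (q*n + i)|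
          ≤ ∑ i ∈ Finset.range (p % n), |g (q*n + i)| := Finset.abs_sum_le_sum_abs _ _
      _ ≤ ∑ i ∈ Finset.range (p % n), C := Finset.sum_le_sum (fun i _ => hg _)
      _ = C * (p % n : ℕ) := by rw [Finset.sum_const, Finset.card_range]; simp [mul_comm]
      _ ≤ C * n := by nlinarith
    have h2 : |((p % n : ℕ):ℝ)*I| ≤ C * n := by
      rw [abs_mul, Nat.abs_cast]
      have : ((p % n : ℕ):ℝ) ≥ 0 := by positivity
      nlinarith [abs_nonneg I]
    calc |(∑ i ∈ Finset.range (p % n), g (q*n + i)) - ((p % n : ℕ):ℝ)*I|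
        ≤ |∑ i ∈ Finset.range (p % n), g (q*n + i)| + |((p % n : ℕ):ℝ)*I| := abs_sub _ _
    _ ≤ C*n + C*n := add_le_add h1 h2
    _ = 2*C*n := by ring
  -- combine
  have hqnp : (q:ℝ)*(n:ℝ) ≤ (p:ℝ) := by exact_mod_cast hqn
  have hbound2 : 2*C*(n:ℝ) * (((Finset.Icc 1 q).filter (fun j => δ/6 < |(∑ i ∈ Finset.range n, g (i + (j-1)*n)) / n - I|)).card : ℝ) ≤ δ/6 * p := by
    have hnn : (0:ℝ) ≤ 2*C*(n:ℝ) := by positivity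
    calc 2*C*(n:ℝ) * (((Finset.Icc 1 q).filter (fun j => δ/6 < |(∑ i ∈ Finset.range n, g (i + (j-1)*n)) / n - I|)).card : ℝ)
        ≤ 2*C*(n:ℝ) * (2*ε'*q) := mul_le_mul_of_nonneg_left hcard hnn
    _ = 4*C*ε'*((q:ℝ)*n) := by ring
    _ ≤ 4*C*ε'*p := mul_le_mul_of_nonneg_left hqnp (by positivity)
    _ = δ/6 * p := by rw [hε'def]; field_simp; ring
  have hbound3 : 2*C*(n:ℝ) ≤ δ/6 * p := by
    have hc1R : (1:ℝ) ≤ (c:ℝ) := by exact_mod_cast (by omega : 1 ≤ c)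
    have hM1n : M₁ ≤ n := le_trans (le_trans (le_max_right N₀ M₁) (le_max_left _ 1)) hMn
    have hcn : (12*C/δ) ≤ ((c:ℝ))^n :=
      le_trans (le_of_lt hM₁) (pow_le_pow_right₀ hc1R hM1n)
    have hpn : (n:ℝ) * ((c:ℝ))^n ≤ (p:ℝ) := by exact_mod_cast hnp
    have hn0 : (0:ℝ) ≤ (n:ℝ) := by positivity
    have key : (n:ℝ) * (12*C/δ) ≤ (p:ℝ) :=
      le_trans (mul_le_mul_of_nonneg_left hcn hn0) hpn
    have h7 : δ/6 * ((n:ℝ) * (12*C/δ)) ≤ δ/6 * (p:ℝ) :=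
      mul_le_mul_of_nonneg_left key (by positivity)
    have h8 : δ/6 * ((n:ℝ) * (12*C/δ)) = 2*C*(n:ℝ) := by field_simp; ring
    linarith
  have hfinal : |(∑ i ∈ Finset.range p, g i) - (p:ℝ)*I| ≤ δ/2 * p := by
    have hpcast : (p:ℝ) = (q:ℝ)*(n:ℝ) + ((p % n : ℕ):ℝ) := by exact_mod_cast hqr.symm
    have hdec : (∑ i ∈ Finset.range p, g i) - (p:ℝ)*I
        = ((∑ j ∈ Finset.range q, ∑ i ∈ Finset.range n, g (i + j*n)) - (q:ℝ)*(n:ℝ)*I)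
          + ((∑ i ∈ Finset.range (p % n), g (q*n + i)) - ((p % n : ℕ):ℝ)*I) := by
      rw [hsplit, hpcast]; ring
    rw [hdec]
    have habs := abs_add_le
      ((∑ j ∈ Finset.range q, ∑ i ∈ Finset.range n, g (i + j*n)) - (q:ℝ)*(n:ℝ)*I)
      ((∑ i ∈ Finset.range (p % n), g (q*n + i)) - ((p % n : ℕ):ℝ)*I)
    have hbound1 : δ/6*((q:ℝ)*(n:ℝ)) ≤ δ/6 * (p:ℝ) :=
      mul_le_mul_of_nonneg_left hqnp (by positivity)
    linarith [hsum1, htail, hbound2, hbound3, habs, hbound1]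
  have hpR : (0:ℝ) < p := by exact_mod_cast hppos
  rw [Real.dist_eq]
  have heq : (∑ i ∈ Finset.range p, g i)/p - I = ((∑ i ∈ Finset.range p, g i) - (p:ℝ)*I)/p := by
    field_simp
  rw [heq, abs_div, abs_of_pos hpR, div_lt_iff₀ hpR]
  calc |(∑ i ∈ Finset.range p, g i) - (p:ℝ)*I| ≤ δ/2 * p := hfinal
  _ < δ * p := by nlinarith


lemma part1 (m : ℕ) (hm : 2 ≤ m) (D : ℕ → Fin m)
    (ν : Measure (ℕ → Fin m)) [IsProbabilityMeasure ν]
    (φ : (ℕ → Fin m) → ℝ) (hφ : Continuous φ)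
    (hP : PropertyP m D ν φ) :
    Tendsto (fun p => (∑ i ∈ Finset.range p, φ (fun r => D (r + i))) / p)
      atTop (nhds (∫ t, φ t ∂ν)) := by
  obtain ⟨C₀, hC₀⟩ := isCompact_univ.exists_bound_of_continuousOn hφ.continuousOn
  have hC : ∀ t, |φ t| ≤ max C₀ 1 := fun t =>
    le_trans (by simpa [Real.norm_eq_abs] using hC₀ t (Set.mem_univ t)) (le_max_left _ _)
  have hIC : |∫ t, φ t ∂ν| ≤ max C₀ 1 := by
    have h := norm_integral_le_of_norm_le_const (μ := ν) (f := φ) (C := max C₀ 1)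
      (Filter.Eventually.of_forall (fun t => by simpa [Real.norm_eq_abs] using hC t))
    simpa [Real.norm_eq_abs, measure_univ] using h
  refine key_est (2*m) (by omega) (fun i => φ (fun r => D (r + i))) (∫ t, φ t ∂ν)
    (max C₀ 1) (le_max_right _ _) (fun i => hC _) hIC ?_
  intro ε hε ε' hε'
  rw [Filter.eventually_all_finset]
  intro b hb
  have htd := propP_geo m hm D ν φ hP b (Finset.mem_Icc.mp hb).1 ε hε
  filter_upwards [htd.eventually_lt_const hε'] with n hn
  have hpos : (0:ℝ) < ((b * (2*m)^n : ℕ) : ℝ) := by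
    have h1 : 0 < b * (2*m)^n :=
      Nat.mul_pos (Finset.mem_Icc.mp hb).1 (Nat.pow_pos (by omega))
    exact_mod_cast h1
  exact le_of_lt ((div_lt_iff₀ hpos).mp hn)

/-- **Property (𝒫) implies normality.**
Let `ν` be the uniform Bernoulli measure on `Σ_m` and `D` a sequence of digits.  If `D`
satisfies Property (𝒫) for a continuous `φ : Σ_m → ℝ`, then the Birkhoff averages
`S_pφ(D)/p` converge to `∫ φ dν`.  In particular, if Property (𝒫) holds for every
continuous potential, then the number `Σ Dᵢ m⁻ⁱ` is normal in base `m`: every word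
`(ε₁,…,ε_{n₀})` occurs in `D` with asymptotic frequency `m^{-n₀}`. -/
theorem propertyP_implies_normal
    (m : ℕ) (hm : 2 ≤ m) (D : ℕ → Fin m)
    (ν : Measure (ℕ → Fin m)) [IsProbabilityMeasure ν]
    (hν : ∀ (n : ℕ) (w : Fin n → Fin m),
      ν {t | ∀ i : Fin n, t (i : ℕ) = w i} = ((m : ℝ≥0∞))⁻¹ ^ n)
    (φ : (ℕ → Fin m) → ℝ) (hφ : Continuous φ)
    (hP : PropertyP m D ν φ) :
    Tendsto (fun p => (∑ i ∈ Finset.range p, φ (fun r => D (r + i))) / p)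
      atTop (nhds (∫ t, φ t ∂ν)) ∧
    ((∀ ψ : (ℕ → Fin m) → ℝ, Continuous ψ → PropertyP m D ν ψ) →
      ∀ (n₀ : ℕ) (w : Fin n₀ → Fin m),
        Tendsto (fun K =>
            (((Finset.range K).filter
              (fun i => ∀ r : Fin n₀, D (i + (r : ℕ)) = w r)).card : ℝ) / K)
          atTop (nhds (((m : ℝ)⁻¹) ^ n₀))) := by
  constructor
  · exact part1 m hm D ν φ hφ hP
  · intro hAll n₀ w
    set S : Set (ℕ → Fin m) := {t | ∀ i : Fin n₀, t (i : ℕ) = w i} with hSdef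
    set ψ : (ℕ → Fin m) → ℝ :=
      fun t => ∏ r : Fin n₀, (if t (r:ℕ) = w r then (1:ℝ) else 0) with hψdef
    have hψc : Continuous ψ := by
      apply continuous_finset_prod
      intro r _
      exact (continuous_of_discreteTopology
        (f := fun x : Fin m => if x = w r then (1:ℝ) else 0)).comp (continuous_apply (r:ℕ))
    have hψind : ∀ t, ψ t = S.indicator (1 : (ℕ → Fin m) → ℝ) t := by
      intro t
      by_cases h : t ∈ S
      · rw [Set.indicator_of_mem h]
        exact Finset.prod_eq_one (fun r _ => if_pos (h r))
      · rw [Set.indicator_of_notMem h]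
        have h' : ∃ r : Fin n₀, t (r:ℕ) ≠ w r := by
          by_contra hc; push_neg at hc; exact h hc
        obtain ⟨r, hr⟩ := h'
        exact Finset.prod_eq_zero (Finset.mem_univ r) (if_neg hr)
    have hSmeas : MeasurableSet S := by
      have hS2 : S = ⋂ i : Fin n₀, (fun t : ℕ → Fin m => t (i:ℕ)) ⁻¹' {w i} := by
        ext t; simp [hSdef, Set.mem_iInter]
      rw [hS2]
      exact MeasurableSet.iInter (fun i => (measurable_pi_apply _) (measurableSet_singleton _))
    have hint : ∫ t, ψ t ∂ν = ((m:ℝ)⁻¹)^n₀ := by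
      rw [show ψ = S.indicator (1 : (ℕ → Fin m) → ℝ) from funext hψind]
      rw [MeasureTheory.integral_indicator_one hSmeas, measureReal_def, hν n₀ w]
      rw [ENNReal.toReal_pow, ENNReal.toReal_inv]
      simp
    have htd := part1 m hm D ν ψ hψc (hAll ψ hψc)
    rw [hint] at htd
    refine htd.congr (fun K => ?_)
    congr 1
    have hterm : ∀ i, ψ (fun r => D (r + i))
        = if (∀ r : Fin n₀, D (i + (r:ℕ)) = w r) then (1:ℝ) else 0 := by
      intro i
      by_cases h : ∀ r : Fin n₀, D (i + (r:ℕ)) = w r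
      · rw [if_pos h]
        exact Finset.prod_eq_one (fun r _ => if_pos
          (show D ((r:ℕ) + i) = w r by rw [Nat.add_comm]; exact h r))
      · rw [if_neg h]
        push_neg at h
        obtain ⟨r, hr⟩ := h
        exact Finset.prod_eq_zero (Finset.mem_univ r) (if_neg
          (show ¬ D ((r:ℕ) + i) = w r by rw [Nat.add_comm]; exact hr))
    rw [Finset.sum_congr rfl (fun i _ => hterm i), Finset.sum_boole]
end
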